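/- arXiv:2210.05194 — 9 statements merged into one kernel-verified Lean document; each statement's English description precedes it below -/
import Mathlib

section
/- Let p be a prime, q = p^m, and let h, m be positive integers with gcd(h, m) = ℓ. Then gcd(p^h + 1, q - 1) equals 1 if m/ℓ is odd and p = 2; equals 2 if m/ℓ is odd and p is odd; and equals p^ℓ + 1 if m/ℓ is even. -/
/-!
Since `p^h + 1 ∣ p^(2h) - 1`, the gcd equals `gcd (p^h + 1) (p^g - 1)` with
`g = gcd (2h) m`, which is `ℓ` or `2ℓ` according to the parity of `m/ℓ`. Writing `b = p^ℓ` and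
`h = ℓk`: modulo `b - 1` we have `b^k + 1 ≡ 2`, and modulo `b^2 - 1`, when `k` is odd (forced
once `m/ℓ` is even, as `k` and `m/ℓ` are coprime), `b^k + 1 ≡ b + 1`, a divisor of `b^2 - 1`.
-/

namespace Nat

theorem gcd_pow_add_one_pow_sub_one (a h m : ℕ) :
    gcd (a ^ h + 1) (a ^ m - 1) = gcd (a ^ h + 1) (a ^ gcd (2 * h) m - 1) := by
  have hdvd : a ^ h + 1 ∣ a ^ (2 * h) - 1 :=
    ⟨a ^ h - 1, by rw [mul_comm, pow_mul, ← one_pow 2, sq_sub_sq, one_pow]⟩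
  rw [← pow_sub_one_gcd_pow_sub_one, ← gcd_assoc, gcd_eq_left hdvd]

theorem gcd_two_mul_left (h m : ℕ) : gcd (2 * h) m = gcd h m * gcd 2 (m / gcd h m) := by
  rcases (gcd h m).eq_zero_or_pos with hg | hg
  · obtain ⟨rfl, rfl⟩ := gcd_eq_zero_iff.mp hg
    simp
  have hcop := coprime_div_gcd_div_gcd hg
  calc gcd (2 * h) m = gcd (gcd h m * (2 * (h / gcd h m))) (gcd h m * (m / gcd h m)) := by
        rw [mul_left_comm, Nat.mul_div_cancel' (gcd_dvd_left h m),
          Nat.mul_div_cancel' (gcd_dvd_right h m)]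
    _ = gcd h m * gcd 2 (m / gcd h m) := by rw [gcd_mul_left, hcop.gcd_mul_right_cancel]

theorem gcd_pow_add_one_sub_one {b : ℕ} (hb : 0 < b) (k : ℕ) :
    gcd (b ^ k + 1) (b - 1) = gcd 2 (b - 1) := by
  have hbk : b ^ k ≡ 1 [MOD b - 1] := by simpa using (modEq_sub hb).pow k
  exact (hbk.add_right 1).gcd_eq

theorem gcd_pow_add_one_sq_sub_one {b k : ℕ} (hb : 0 < b) (hk : Odd k) :
    gcd (b ^ k + 1) (b ^ 2 - 1) = b + 1 := by
  obtain ⟨j, rfl⟩ := hk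
  have hbk : b ^ (2 * j + 1) ≡ b [MOD b ^ 2 - 1] := by
    simpa [pow_succ, pow_mul] using ((modEq_sub (one_le_pow 2 b hb)).pow j).mul_right b
  rw [(hbk.add_right 1).gcd_eq, gcd_eq_left ⟨b - 1, by rw [← one_pow 2, sq_sub_sq, one_pow]⟩]

end Nat

theorem stmt0_general (p m h ℓ : ℕ) (hp : p.Prime) (hh : 0 < h)
    (hℓ : ℓ = Nat.gcd h m) :
    (Odd (m / ℓ) → p = 2 → Nat.gcd (p ^ h + 1) (p ^ m - 1) = 1) ∧
    (Odd (m / ℓ) → Odd p → Nat.gcd (p ^ h + 1) (p ^ m - 1) = 2) ∧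
    (Even (m / ℓ) → Nat.gcd (p ^ h + 1) (p ^ m - 1) = p ^ ℓ + 1) := by
  have hℓ0 : 0 < ℓ := hℓ ▸ Nat.gcd_pos_of_pos_left m hh
  have hb : 0 < p ^ ℓ := pow_pos hp.pos ℓ
  have hk : h = ℓ * (h / ℓ) := (Nat.mul_div_cancel' (hℓ ▸ Nat.gcd_dvd_left h m)).symm
  have hd : Nat.gcd (p ^ h + 1) (p ^ m - 1) =
      Nat.gcd ((p ^ ℓ) ^ (h / ℓ) + 1) ((p ^ ℓ) ^ Nat.gcd 2 (m / ℓ) - 1) := by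
    rw [Nat.gcd_pow_add_one_pow_sub_one, Nat.gcd_two_mul_left, ← hℓ, ← pow_mul, ← pow_mul, ← hk]
  refine ⟨fun hodd hp2 => ?_, fun hodd hpodd => ?_, fun heven => ?_⟩
  · rw [hd, hodd.coprime_two_left, pow_one, Nat.gcd_pow_add_one_sub_one hb, hp2]
    exact Nat.coprime_two_left.mpr
      (Nat.Even.sub_odd Nat.one_le_two_pow ((Nat.even_pow' hℓ0.ne').mpr even_two) odd_one)
  · rw [hd, hodd.coprime_two_left, pow_one, Nat.gcd_pow_add_one_sub_one hb]
    exact Nat.gcd_eq_left (Nat.Odd.sub_odd hpodd.pow odd_one).two_dvd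
  · have hcop : Nat.Coprime (h / ℓ) (m / ℓ) := hℓ ▸ Nat.coprime_div_gcd_div_gcd (hℓ ▸ hℓ0)
    have hkodd : Odd (h / ℓ) := Nat.coprime_two_right.mp (hcop.coprime_dvd_right heven.two_dvd)
    rw [hd, Nat.gcd_eq_left heven.two_dvd, Nat.gcd_pow_add_one_sq_sub_one hb hkodd]

theorem stmt0 (p m h ℓ : ℕ) (hp : p.Prime) (hm : 0 < m) (hh : 0 < h)
    (hℓ : ℓ = Nat.gcd h m) :
    (Odd (m / ℓ) → p = 2 → Nat.gcd (p ^ h + 1) (p ^ m - 1) = 1) ∧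
    (Odd (m / ℓ) → Odd p → Nat.gcd (p ^ h + 1) (p ^ m - 1) = 2) ∧
    (Even (m / ℓ) → Nat.gcd (p ^ h + 1) (p ^ m - 1) = p ^ ℓ + 1) :=
  stmt0_general p m h ℓ hp hh hℓ
end

section
/- Let q = 2^m with m odd, m ≥ 3. Then for any two distinct elements a, b ∈ F_q, the polynomial u(x) = x^2 + (a+b)x + a^2 + b^2 + ab has no root in F_q. Equivalently, for any c ∈ F_q, a^2 + b^2 + c^2 + ab + ac + bc ≠ 0. -/
/-!
Over a field of characteristic 2, the substitution `x = (a + b) u + b` turns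
`x ^ 2 + (a + b) x + a ^ 2 + b ^ 2 + a b` into `(a + b) ^ 2 (u ^ 2 + u + 1)`, so a root
would be a primitive cube root of unity. In `𝔽_q` every element satisfies `u ^ q = u`, and for
`q = 2 ^ m` with `m` odd we have `q ≡ 2 [MOD 3]`; hence a cube root of unity satisfies
`u = u ^ q = u ^ 2`, which is incompatible with `u ^ 2 + u + 1 = 0` in characteristic 2.
-/

lemma Nat.two_pow_mod_three_of_odd {m : ℕ} (hm : Odd m) : 2 ^ m % 3 = 2 := by
  obtain ⟨k, rfl⟩ := hm
  rw [pow_succ, pow_mul, Nat.mul_mod, Nat.pow_mod]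
  norm_num

lemma FiniteField.charP_two_of_card_eq_two_pow {F : Type*} [Field F] [Fintype F] {m : ℕ}
    (hm : m ≠ 0) (hF : Fintype.card F = 2 ^ m) : CharP F 2 :=
  ringChar.of_eq <| FiniteField.even_card_iff_char_two.mpr <| by
    rw [hF, Nat.pow_mod, Nat.mod_self, zero_pow hm, Nat.zero_mod]

lemma FiniteField.sq_add_self_add_one_ne_zero {F : Type*} [Field F] [Fintype F] [CharP F 2]
    (hF : Fintype.card F % 3 = 2) (u : F) : u ^ 2 + u + 1 ≠ 0 := by
  intro hu
  have hcube : u ^ 3 = 1 := by linear_combination (u - 1) * hu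
  have hfrob : u ^ 2 = u := by
    calc u ^ 2 = (u ^ 3) ^ (Fintype.card F / 3) * u ^ 2 := by rw [hcube, one_pow, one_mul]
      _ = u ^ Fintype.card F := by
        rw [← pow_mul, ← pow_add, ← hF, Nat.div_add_mod]
      _ = u := FiniteField.pow_card u
  have htwo : (2 : F) = 0 := CharTwo.two_eq_zero
  exact one_ne_zero (by linear_combination hu - hfrob - u * htwo : (1 : F) = 0)

lemma CharTwo.sq_add_add_mul_add_ne_zero {F : Type*} [Field F] [CharP F 2]
    (hF : ∀ u : F, u ^ 2 + u + 1 ≠ 0) {a b : F} (hab : a ≠ b) (x : F) :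
    x ^ 2 + (a + b) * x + (a ^ 2 + b ^ 2 + a * b) ≠ 0 := by
  have hd : a + b ≠ 0 := mt CharTwo.add_eq_zero.mp hab
  have htwo : (2 : F) = 0 := CharTwo.two_eq_zero
  intro hx
  apply hF ((x + b) / (a + b))
  field_simp
  linear_combination hx + (b * x + b ^ 2 + a * b) * htwo

theorem stmt5_general (m : ℕ) (hmo : Odd m)
    (F : Type*) [Field F] [Fintype F] (hF : Fintype.card F = 2 ^ m)
    (a b : F) (hab : a ≠ b) :
    (∀ x : F, x ^ 2 + (a + b) * x + (a ^ 2 + b ^ 2 + a * b) ≠ 0) ∧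
    (∀ c : F, a ^ 2 + b ^ 2 + c ^ 2 + a * b + a * c + b * c ≠ 0) := by
  have := FiniteField.charP_two_of_card_eq_two_pow hmo.pos.ne' hF
  have hroot := CharTwo.sq_add_add_mul_add_ne_zero
    (FiniteField.sq_add_self_add_one_ne_zero (hF ▸ Nat.two_pow_mod_three_of_odd hmo)) hab
  exact ⟨hroot, fun c hc => hroot c (by linear_combination hc)⟩

theorem stmt5 (m : ℕ) (hm : 3 ≤ m) (hmo : Odd m)
    (F : Type*) [Field F] [Fintype F] (hF : Fintype.card F = 2 ^ m)
    (a b : F) (hab : a ≠ b) :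
    (∀ x : F, x ^ 2 + (a + b) * x + (a ^ 2 + b ^ 2 + a * b) ≠ 0) ∧
    (∀ c : F, a ^ 2 + b ^ 2 + c ^ 2 + a * b + a * c + b * c ≠ 0) :=
  stmt5_general m hmo F hF a b hab
end

section
/- Let h and m be positive integers with gcd(h, m) = 1 and q = 2^m. For any a, b, c ∈ F_q, not all zero, the number of roots of f(x) = a x^{2^h+1} + b x + c among the nonzero elements of F_q is 0, 1, or 3. -/
open Set

private lemma mersenne_gcd (h m : ℕ) :
    Nat.gcd (2 ^ h - 1) (2 ^ m - 1) = 2 ^ Nat.gcd h m - 1 := by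
  induction h, m using Nat.gcd.induction with
  | H0 n => simp
  | H1 a b ha ih =>
    obtain ⟨t, ht⟩ : (2 ^ a - 1) ∣ (2 ^ (a * (b / a)) - 1) := by
      simpa [pow_mul] using Nat.sub_dvd_pow_sub_pow (2 ^ a) 1 (b / a)
    have h1 : (1 : ℕ) ≤ 2 ^ (a * (b / a)) := Nat.one_le_two_pow
    have h2 : (1 : ℕ) ≤ 2 ^ (b % a) := Nat.one_le_two_pow
    have e1 : 2 ^ (a * (b / a)) = (2 ^ a - 1) * t + 1 := by
      rw [← ht]
      exact (Nat.sub_add_cancel h1).symm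
    have e2 : 2 ^ b = ((2 ^ a - 1) * t + 1) * 2 ^ (b % a) := by
      rw [← e1, ← pow_add]
      congr 1
      exact (Nat.div_add_mod b a).symm
    have e3 : ((2 ^ a - 1) * t + 1) * 2 ^ (b % a)
        = 2 ^ (b % a) * t * (2 ^ a - 1) + 2 ^ (b % a) := by ring
    have e5 : 2 ^ b = 2 ^ (b % a) * t * (2 ^ a - 1) + 2 ^ (b % a) := by rw [e2, e3]
    have e4 : 2 ^ b - 1 = (2 ^ (b % a) - 1) + 2 ^ (b % a) * t * (2 ^ a - 1) := by
      rw [e5, Nat.add_sub_assoc h2, Nat.add_comm]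
    rw [e4, Nat.gcd_add_mul_right_right, Nat.gcd_comm, ih, Nat.gcd_rec a b]

theorem stmt7 (m h : ℕ) (hm : 0 < m) (hh : 0 < h) (hgcd : Nat.gcd h m = 1)
    (F : Type*) [Field F] [Fintype F] (hF : Fintype.card F = 2 ^ m)
    (a b c : F) (habc : ¬(a = 0 ∧ b = 0 ∧ c = 0))
    (N : ℕ)
    (hN : N = {x : F | x ≠ 0 ∧ a * x ^ (2 ^ h + 1) + b * x + c = 0}.ncard) :
    N = 0 ∨ N = 1 ∨ N = 3 := by
  classical
  -- the characteristic of F is 2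
  have hchp : CharP F (ringChar F) := ringChar.charP F
  have hpp : (ringChar F).Prime := CharP.char_is_prime F _
  obtain ⟨n, -, hcard⟩ := FiniteField.card F (ringChar F)
  have hrc : ringChar F = 2 := by
    have hdvd : ringChar F ∣ 2 ^ m := by
      rw [← hF, hcard]
      exact dvd_pow_self _ (by exact_mod_cast n.pos.ne')
    have := hpp.dvd_of_dvd_pow hdvd
    exact (Nat.prime_dvd_prime_iff_eq hpp Nat.prime_two).mp this
  haveI hc2 : CharP F 2 := hrc ▸ hchp
  haveI : Fact (Nat.Prime 2) := ⟨Nat.prime_two⟩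
  have htwo : (2 : F) = 0 := by
    have := CharP.cast_eq_zero F 2
    exact_mod_cast this
  -- Frobenius facts
  have hfrob : ∀ u v : F, (u + v) ^ (2 ^ h) = u ^ (2 ^ h) + v ^ (2 ^ h) := fun u v =>
    add_pow_char_pow u v 2 h
  have frobinj : ∀ u v : F, u ^ (2 ^ h) = v ^ (2 ^ h) → u = v := by
    intro u v huv
    have hsub : (u - v) ^ (2 ^ h) = 0 := by
      rw [sub_pow_char_pow, huv, sub_self]
    have hz := pow_eq_zero_iff (n := 2 ^ h) (by positivity) |>.mp hsub
    exact sub_eq_zero.mp hz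
  have hQ1 : 1 ≤ 2 ^ h := Nat.one_le_two_pow
  have hgcdM : Nat.gcd (2 ^ h - 1) (2 ^ m - 1) = 1 := by
    rw [mersenne_gcd, hgcd, pow_one]
  -- cancellation for the (2^h - 1) power map
  have hcancel : ∀ u v : F, u ≠ 0 → v ≠ 0 →
      u ^ (2 ^ h) * v = v ^ (2 ^ h) * u → u = v := by
    intro u v hu hv huv
    have hw0 : u * v⁻¹ ≠ 0 := mul_ne_zero hu (inv_ne_zero hv)
    have hw : (u * v⁻¹) ^ (2 ^ h) = u * v⁻¹ := by
      rw [mul_pow, inv_pow]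
      field_simp
      linear_combination huv
    have hpow1 : (u * v⁻¹) ^ (2 ^ h - 1) = 1 := by
      have hexp : 2 ^ h - 1 + 1 = 2 ^ h := by omega
      have : (u * v⁻¹) ^ (2 ^ h - 1) * (u * v⁻¹) = 1 * (u * v⁻¹) := by
        rw [← pow_succ, hexp, hw, one_mul]
      exact mul_right_cancel₀ hw0 this
    have hpow2 : (u * v⁻¹) ^ (2 ^ m - 1) = 1 := by
      have := FiniteField.pow_card_sub_one_eq_one (u * v⁻¹) hw0
      rwa [hF] at this
    have hordd : orderOf (u * v⁻¹) ∣ 1 := by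
      rw [← hgcdM]
      exact Nat.dvd_gcd (orderOf_dvd_of_pow_eq_one hpow1) (orderOf_dvd_of_pow_eq_one hpow2)
    have hw1 : u * v⁻¹ = 1 := orderOf_eq_one_iff.mp (Nat.dvd_one.mp hordd)
    field_simp at hw1
    exact hw1
  -- surjectivity of the (2^h - 1) power map on nonzero elements
  have hsurj : ∀ w : F, w ≠ 0 → ∃ r : F, r ≠ 0 ∧ r ^ (2 ^ h - 1) = w := by
    intro w hw
    have hinj : Function.Injective (fun u : Fˣ => u ^ (2 ^ h - 1)) := by
      intro u v huv
      simp only at huv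
      have h1 : (u * v⁻¹) ^ (2 ^ h - 1) = 1 := by
        rw [mul_pow, inv_pow, huv, mul_inv_cancel]
      have h2 : (u * v⁻¹) ^ (2 ^ m - 1) = 1 := by
        have hpce : (u * v⁻¹) ^ Fintype.card Fˣ = 1 := pow_card_eq_one
        rwa [Fintype.card_units, hF] at hpce
      have hordd : orderOf (u * v⁻¹) ∣ 1 := by
        rw [← hgcdM]
        exact Nat.dvd_gcd (orderOf_dvd_of_pow_eq_one h1) (orderOf_dvd_of_pow_eq_one h2)
      have := orderOf_eq_one_iff.mp (Nat.dvd_one.mp hordd)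
      exact mul_inv_eq_one.mp this
    obtain ⟨u, hu⟩ := Finite.injective_iff_surjective.mp hinj (Units.mk0 w hw)
    refine ⟨(u : F), u.ne_zero, ?_⟩
    have := congrArg (Units.val) hu
    simpa using this
  set S : Set F := {x : F | x ≠ 0 ∧ a * x ^ (2 ^ h + 1) + b * x + c = 0} with hSdef
  have hSfin : S.Finite := S.toFinite
  have hne : ∀ u v : F, u ≠ v → u + v ≠ 0 := by
    intro u v huv h0
    exact huv (by linear_combination h0 - v * htwo)
  rcases eq_or_ne a 0 with ha | ha
  · -- linear case
    rcases eq_or_ne b 0 with hb | hb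
    · have hcne : c ≠ 0 := by
        intro hcc
        exact habc ⟨ha, hb, hcc⟩
      have hS : S = ∅ := by
        ext x
        simp only [hSdef, mem_setOf_eq, mem_empty_iff_false, iff_false, not_and]
        intro hx0 hx
        rw [ha, hb] at hx
        apply hcne
        linear_combination hx
      left
      rw [hN, hS, Set.ncard_empty]
    · have hsub : S ⊆ {-(b⁻¹ * c)} := by
        intro x hx
        obtain ⟨hx0, hxe⟩ := hx
        rw [ha] at hxe
        simp only [mem_singleton_iff]
        field_simp
        linear_combination hxe
      have hle : S.ncard ≤ 1 := by
        have := Set.ncard_le_ncard hsub (Set.finite_singleton _)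
        simpa using this
      rw [hN]
      omega
  · -- main case: a ≠ 0
    -- the fundamental three-root identity
    have keyC : ∀ x y z : F, x ∈ S → y ∈ S → z ∈ S →
        y * ((y + z) ^ (2 ^ h)) * (x + z) = x * ((x + z) ^ (2 ^ h)) * (y + z) := by
      rintro x y z ⟨-, hx⟩ ⟨-, hy⟩ ⟨-, hz⟩
      rw [pow_succ] at hx hy hz
      rw [hfrob y z, hfrob x z]
      apply mul_left_cancel₀ ha
      linear_combination (-(y + z)) * hx + (x + z) * hy + (y - x) * hz
        + (b * z * (x - y)) * htwo
    -- at most three roots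
    have hle3 : S.ncard ≤ 3 := by
      by_cases hcc : S.ncard ≤ 2
      · omega
      · push_neg at hcc
        obtain ⟨x, hx, y, hy, z, hz, hxy, hxz, hyz⟩ := (Set.two_lt_ncard hSfin).mp hcc
        have hsub : S ⊆ {x, y, z} := by
          intro w hw
          by_contra hwmem
          simp only [mem_insert_iff, mem_singleton_iff, not_or] at hwmem
          obtain ⟨hwx, hwy, hwz⟩ := hwmem
          have hx0 : x ≠ 0 := hx.1
          have hy0 : y ≠ 0 := hy.1
          have T1 := keyC x y z hx hy hz
          have T2 := keyC x y w hx hy hw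
          have T3 := congrArg₂ (· * ·) T1 T2.symm
          have hADBC : ((y + z) * (x + w)) ^ (2 ^ h) * ((x + z) * (y + w))
              = ((x + z) * (y + w)) ^ (2 ^ h) * ((y + z) * (x + w)) := by
            rw [mul_pow, mul_pow]
            apply mul_left_cancel₀ (mul_ne_zero hx0 hy0)
            linear_combination T3
          have hAD0 : (y + z) * (x + w) ≠ 0 :=
            mul_ne_zero (hne y z hyz) (hne x w (Ne.symm hwx))
          have hBC0 : (x + z) * (y + w) ≠ 0 :=
            mul_ne_zero (hne x z hxz) (hne y w (Ne.symm hwy))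
          have heq := hcancel _ _ hAD0 hBC0 hADBC
          have hfac : (y - x) * (w - z) = 0 := by linear_combination heq
          rcases mul_eq_zero.mp hfac with h1 | h2
          · exact hxy (show x = y by linear_combination -h1)
          · exact hwz (show w = z by linear_combination h2)
        calc S.ncard ≤ ({x, y, z} : Set F).ncard :=
              Set.ncard_le_ncard hsub (Set.toFinite _)
          _ ≤ ({y, z} : Set F).ncard + 1 := Set.ncard_insert_le _ _
          _ ≤ (({z} : Set F).ncard + 1) + 1 := by
              exact Nat.add_le_add_right (Set.ncard_insert_le _ _) 1
          _ ≤ 3 := by rw [Set.ncard_singleton]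
    -- exactly two roots is impossible
    have hne2 : S.ncard ≠ 2 := by
      intro h2
      obtain ⟨x, y, hxy, hSxy⟩ := Set.ncard_eq_two.mp h2
      have hx : x ∈ S := by rw [hSxy]; simp
      have hy : y ∈ S := by rw [hSxy]; simp
      obtain ⟨hx0, hxe⟩ := hx
      obtain ⟨hy0, hye⟩ := hy
      rw [pow_succ] at hxe hye
      obtain ⟨r, hr0, hrQ⟩ := hsurj (x * y⁻¹) (mul_ne_zero hx0 (inv_ne_zero hy0))
      have hr : r ^ (2 ^ h) * y = r * x := by
        have hre : r ^ (2 ^ h) = r ^ (2 ^ h - 1) * r := by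
          rw [← pow_succ]
          congr 1
          omega
        rw [hre, hrQ]
        field_simp
      have hr1 : r ≠ 1 := by
        rintro rfl
        rw [one_pow, one_mul, one_mul] at hr
        exact hxy hr.symm
      have hrp1 : r + 1 ≠ 0 := fun h0 => hr1 (by linear_combination h0 - htwo)
      set e : F := (r + 1)⁻¹ with hedef
      have he : (r + 1) * e = 1 := mul_inv_cancel₀ hrp1
      have he0 : e ≠ 0 := inv_ne_zero hrp1
      have heQ : (r ^ (2 ^ h) + 1) * e ^ (2 ^ h) = 1 := by
        have := congrArg (· ^ (2 ^ h)) he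
        rw [mul_pow, one_pow, hfrob r 1, one_pow] at this
        exact this
      have hrQ1 : r ^ (2 ^ h) + 1 ≠ 0 := by
        intro h0
        rw [h0, zero_mul] at heQ
        exact zero_ne_one heQ
      have hxy0 : x + y ≠ 0 := hne x y hxy
      -- the new root z
      set z : F := x + (x + y) * e with hzdef
      have hzx : z ≠ x := by
        intro h0
        rw [hzdef] at h0
        exact mul_ne_zero hxy0 he0 (by linear_combination h0)
      have hzy : z ≠ y := by
        intro h0
        rw [hzdef] at h0
        have h1 : (x + y) * e = (x + y) * 1 := by linear_combination h0 - x * htwo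
        have he1 : e = 1 := mul_left_cancel₀ hxy0 h1
        rw [he1, mul_one] at he
        exact hr0 (by linear_combination he)
      have hz0 : z ≠ 0 := by
        intro h0
        rw [hzdef] at h0
        have h1 : x * (r + 1) + (x + y) = 0 := by
          linear_combination (r + 1) * h0 - (x + y) * he
        have hy_eq : y = x * r := by linear_combination -h1 + (x + y) * htwo
        have h3 : r ^ (2 ^ h) * (x * r) = r * x := by rw [← hy_eq]; exact hr
        have h4 : r ^ (2 ^ h) * (r * x) = 1 * (r * x) := by linear_combination h3
        have h5 : r ^ (2 ^ h) = 1 := mul_right_cancel₀ (mul_ne_zero hr0 hx0) h4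
        exact hr1 (frobinj r 1 (by rw [one_pow]; exact h5))
      have hzQ : z ^ (2 ^ h)
          = x ^ (2 ^ h) + (x ^ (2 ^ h) + y ^ (2 ^ h)) * e ^ (2 ^ h) := by
        rw [hzdef, hfrob, mul_pow, hfrob]
      have hzroot : a * z ^ (2 ^ h + 1) + b * z + c = 0 := by
        have hbig : (y * (r + 1) * (r ^ (2 ^ h) + 1))
            * (a * z ^ (2 ^ h + 1) + b * z + c) = 0 := by
          rw [pow_succ, hzQ]
          rw [hzdef]
          linear_combination
            (4 * y + y * r ^ (2 ^ h) + 3 * y * r + y * r * r ^ (2 ^ h) + x * r) * hxe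
            + (y + 2 * x + x * r) * hye
            + ((x + y) * (b + a * x ^ (2 ^ h))) * hr
            + (y * (r ^ (2 ^ h) + 1) * (x + y)
                * (a * x ^ (2 ^ h) + b + a * (x ^ (2 ^ h) + y ^ (2 ^ h)) * e ^ (2 ^ h))) * he
            + (y * (r + 1) * a * (x ^ (2 ^ h) + y ^ (2 ^ h)) * x
                + y * a * (x ^ (2 ^ h) + y ^ (2 ^ h)) * (x + y)) * heQ
            + (a * y ^ 2 * x ^ (2 ^ h)
                - (2 * c * y + c * y * r + c * x + c * x * r
                    + 2 * b * x * y + b * x * y * r)) * htwo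
        have hM : y * (r + 1) * (r ^ (2 ^ h) + 1) ≠ 0 :=
          mul_ne_zero (mul_ne_zero hy0 hrp1) hrQ1
        rcases mul_eq_zero.mp hbig with hbad | hgood
        · exact absurd hbad hM
        · exact hgood
      have hzS : z ∈ S := ⟨hz0, hzroot⟩
      rw [hSxy] at hzS
      rcases hzS with h1 | h2
      · exact hzx h1
      · exact hzy h2
    rw [hN]
    omega
end

section
/- Let h and m be positive integers with gcd(h, m) = 1 and q = 2^m. For any a, b, c ∈ F_q, not all zero, the number of roots of g(x) = a x^{2^h+1} + b x^{2^h} + c among the nonzero elements of F_q is 0, 1, or 3. -/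
/-!
Put `Q = 2 ^ h` and let `x` be a root of `z ^ (Q + 1) + α z + γ` with `γ ≠ 0`. Any other root is
`x + t⁻¹` where `t` solves the additive equation `(x ^ Q + α) t ^ Q + x t = 1`. The kernel of the
linearized polynomial `t ↦ (x ^ Q + α) t ^ Q + x t` is `{0, t₀}`, where `t₀` is the unique unit
with `t₀ ^ (Q - 1) = x / (x ^ Q + α)`: it is unique because `gcd (2 ^ h - 1, 2 ^ m - 1) =
2 ^ gcd h m - 1 = 1`. So the solutions of the equation form either the empty set or a coset of a
group of order 2, and there are 1 or 3 roots. When `a c ≠ 0`, inverting `x` turns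
`a x ^ (Q + 1) + b x ^ Q + c` into this shape; otherwise it has at most one nonzero root.
-/

open Set

lemma AddMonoidHom.ncard_preimage_singleton_eq_zero_or {G H : Type*} [AddGroup G] [AddGroup H]
    (f : G →+ H) (y : H) :
    (f ⁻¹' {y}).ncard = 0 ∨ (f ⁻¹' {y}).ncard = Nat.card f.ker := by
  rcases (f ⁻¹' {y}).eq_empty_or_nonempty with hy | ⟨g, hg⟩
  · exact Or.inl (by rw [hy, ncard_empty])
  · rw [mem_preimage, mem_singleton_iff] at hg
    subst hg
    exact Or.inr (by rw [← Nat.card_coe_set_eq, Nat.card_congr (f.fiberEquivKer g)])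

def trinomialRoots {F : Type*} [Field F] (n : ℕ) (α γ : F) : Set F :=
  {z | z ^ (n + 1) + α * z + γ = 0}

@[simp]
lemma mem_trinomialRoots {F : Type*} [Field F] {n : ℕ} {α γ z : F} :
    z ∈ trinomialRoots n α γ ↔ z ^ (n + 1) + α * z + γ = 0 := Iff.rfl

section CharTwo

variable {F : Type*} [Field F] [CharP F 2] {h : ℕ}

def linearizedBinomial (h : ℕ) (A B : F) : F →+ F where
  toFun t := A * t ^ 2 ^ h + B * t
  map_zero' := by simp
  map_add' s t := by simp only [add_pow_char_pow]; ring

@[simp]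
lemma linearizedBinomial_apply (A B t : F) :
    linearizedBinomial h A B t = A * t ^ 2 ^ h + B * t := rfl

lemma card_ker_linearizedBinomial (hQ : (Nat.card Fˣ).Coprime (2 ^ h - 1)) {A B : F}
    (hA : A ≠ 0) (hB : B ≠ 0) : Nat.card (linearizedBinomial h A B).ker = 2 := by
  obtain ⟨u, hu⟩ := (powCoprime hQ).surjective (Units.mk0 (B / A) (div_ne_zero hB hA))
  have hker : ((linearizedBinomial h A B).ker : Set F) = {0, (u : F)} := by
    ext t
    rcases eq_or_ne t 0 with rfl | ht
    · simp
    have hfactor : A * t ^ 2 ^ h + B * t = t * (A * t ^ (2 ^ h - 1) + B) := by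
      rw [mul_add, ← mul_assoc, mul_comm t A, mul_assoc, ← pow_succ',
        Nat.sub_add_cancel Nat.one_le_two_pow]
      ring
    calc t ∈ ((linearizedBinomial h A B).ker : Set F)
        ↔ t ^ (2 ^ h - 1) = B / A := by
          simp [hfactor, ht, CharTwo.add_eq_zero, eq_div_iff hA, mul_comm]
      _ ↔ Units.mk0 t ht ^ (2 ^ h - 1) = Units.mk0 (B / A) (div_ne_zero hB hA) := by
          simp [Units.ext_iff]
      _ ↔ Units.mk0 t ht = u := by rw [← hu]; exact (powCoprime hQ).injective.eq_iff
      _ ↔ t ∈ ({0, (u : F)} : Set F) := by simp [Units.ext_iff, ht]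
  rw [← SetLike.coe_sort_coe, hker, Nat.card_coe_set_eq, ncard_pair u.ne_zero.symm]

variable {α γ x : F}

lemma add_mem_trinomialRoots_iff (hx : x ∈ trinomialRoots (2 ^ h) α γ) {s : F} (hs : s ≠ 0) :
    x + s ∈ trinomialRoots (2 ^ h) α γ ↔ linearizedBinomial h (x ^ 2 ^ h + α) x s⁻¹ = 1 := by
  have hshift : (x + s) ^ (2 ^ h + 1) + α * (x + s) + γ =
      s ^ (2 ^ h + 1) * (linearizedBinomial h (x ^ 2 ^ h + α) x s⁻¹ + 1) := by
    have hinv : s * s⁻¹ = 1 := mul_inv_cancel₀ hs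
    have hinvQ : s ^ 2 ^ h * s⁻¹ ^ 2 ^ h = 1 := by rw [← mul_pow, hinv, one_pow]
    rw [mem_trinomialRoots] at hx
    rw [linearizedBinomial_apply, pow_succ, add_pow_char_pow]
    linear_combination hx - (x ^ 2 ^ h + α) * s * hinvQ - x * s ^ 2 ^ h * hinv
  rw [mem_trinomialRoots, hshift, mul_eq_zero, CharTwo.add_eq_zero]
  simp [hs]

lemma trinomialRoots_eq_insert_image (hx : x ∈ trinomialRoots (2 ^ h) α γ) :
    trinomialRoots (2 ^ h) α γ =
      insert x ((fun t ↦ x + t⁻¹) '' (linearizedBinomial h (x ^ 2 ^ h + α) x ⁻¹' {1})) := by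
  ext z
  constructor
  · intro hz
    rcases eq_or_ne z x with rfl | hzx
    · exact mem_insert _ _
    refine mem_insert_of_mem _ ⟨(z - x)⁻¹, ?_, by simp⟩
    rw [mem_preimage, mem_singleton_iff, ← add_mem_trinomialRoots_iff hx (sub_ne_zero.mpr hzx),
      add_sub_cancel]
    exact hz
  · rintro (rfl | ⟨t, ht, rfl⟩)
    · exact hx
    have ht0 : t ≠ 0 := by rintro rfl; simp at ht
    rwa [add_mem_trinomialRoots_iff hx (inv_ne_zero ht0), inv_inv]

lemma ncard_trinomialRoots_of_mem [Finite F] (hx : x ∈ trinomialRoots (2 ^ h) α γ) :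
    (trinomialRoots (2 ^ h) α γ).ncard =
      (linearizedBinomial h (x ^ 2 ^ h + α) x ⁻¹' {1}).ncard + 1 := by
  rw [trinomialRoots_eq_insert_image hx, ncard_insert_of_notMem, ncard_image_of_injective]
  · exact fun t t' htt' ↦ inv_injective (add_left_cancel htt')
  · rintro ⟨t, ht, hxt⟩
    simp only [add_eq_left, inv_eq_zero] at hxt
    subst hxt
    simp at ht

theorem ncard_trinomialRoots_eq_zero_or_one_or_three [Finite F]
    (hQ : (Nat.card Fˣ).Coprime (2 ^ h - 1)) (hγ : γ ≠ 0) :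
    (trinomialRoots (2 ^ h) α γ).ncard = 0 ∨ (trinomialRoots (2 ^ h) α γ).ncard = 1 ∨
      (trinomialRoots (2 ^ h) α γ).ncard = 3 := by
  rcases (trinomialRoots (2 ^ h) α γ).eq_empty_or_nonempty with hempty | ⟨x, hx⟩
  · exact Or.inl (by rw [hempty, ncard_empty])
  have hγx : x * (x ^ 2 ^ h + α) = γ := by
    rw [mem_trinomialRoots] at hx
    linear_combination hx - γ * CharTwo.two_eq_zero (R := F)
  have hx0 : x ≠ 0 := by rintro rfl; simp [eq_comm, hγ] at hγx
  have hA : x ^ 2 ^ h + α ≠ 0 := by rintro hA; simp [hA, eq_comm, hγ] at hγx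
  rw [ncard_trinomialRoots_of_mem hx]
  rcases (linearizedBinomial h _ x).ncard_preimage_singleton_eq_zero_or 1 with h0 | h2
  · exact Or.inr (Or.inl (by rw [h0]))
  · exact Or.inr (Or.inr (by rw [h2, card_ker_linearizedBinomial hQ hA hx0]))

end CharTwo

section NonzeroRoots

variable {F : Type*} [Field F] {n : ℕ} {a b c : F}

lemma inv_image_nonzero_roots (ha : a ≠ 0) (hc : c ≠ 0) :
    (·⁻¹) '' {x : F | x ≠ 0 ∧ a * x ^ (n + 1) + b * x ^ n + c = 0} =
      trinomialRoots n (b / c) (a / c) := by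
  ext z
  rw [image_inv_eq_inv, mem_inv, mem_ofPred_eq, mem_trinomialRoots]
  rcases eq_or_ne z 0 with rfl | hz
  · simp [ha, hc]
  have hreverse : z ^ (n + 1) + b / c * z + a / c =
      z ^ (n + 1) / c * (a * z⁻¹ ^ (n + 1) + b * z⁻¹ ^ n + c) := by
    simp only [inv_pow]
    field_simp
    ring
  simp [hreverse, hz, hc]

lemma nonzero_roots_subsingleton_of_const_eq_zero (ha : a ≠ 0) :
    {x : F | x ≠ 0 ∧ a * x ^ (n + 1) + b * x ^ n + 0 = 0}.Subsingleton := by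
  have hroot : ∀ x : F, x ≠ 0 → a * x ^ (n + 1) + b * x ^ n + 0 = 0 → x = -b / a := by
    intro x hx0 hx
    have hfactor : x ^ n * (a * x + b) = 0 := by linear_combination hx
    rw [eq_div_iff ha]
    linear_combination (mul_eq_zero.mp hfactor).resolve_left (pow_ne_zero n hx0)
  rintro x ⟨hx0, hx⟩ y ⟨hy0, hy⟩
  rw [hroot x hx0 hx, hroot y hy0 hy]

lemma nonzero_roots_subsingleton_of_lead_eq_zero {p h : ℕ} [ExpChar F p] (hb : b ≠ 0) :
    {x : F | x ≠ 0 ∧ 0 * x ^ (p ^ h + 1) + b * x ^ p ^ h + c = 0}.Subsingleton := by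
  rintro x ⟨-, hx⟩ y ⟨-, hy⟩
  apply (iterateFrobenius F p h).injective
  rw [iterateFrobenius_def, iterateFrobenius_def]
  exact mul_left_cancel₀ hb (by linear_combination hx - hy)

end NonzeroRoots

theorem stmt9_general (m h : ℕ) (hgcd : Nat.gcd h m = 1)
    (F : Type*) [Field F] [Fintype F] (hF : Fintype.card F = 2 ^ m)
    (a b c : F) (habc : ¬(a = 0 ∧ b = 0 ∧ c = 0))
    (N : ℕ)
    (hN : N = {x : F | x ≠ 0 ∧ a * x ^ (2 ^ h + 1) + b * x ^ 2 ^ h + c = 0}.ncard) :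
    N = 0 ∨ N = 1 ∨ N = 3 := by
  subst hN
  have : CharP F 2 := charP_of_card_eq_prime_pow hF
  have hQ : (Nat.card Fˣ).Coprime (2 ^ h - 1) := by
    rw [Nat.card_units, Nat.card_eq_fintype_card, hF, Nat.Coprime,
      Nat.pow_sub_one_gcd_pow_sub_one, Nat.gcd_comm, hgcd, pow_one]
  have of_subsingleton {s : Set F} (hs : s.Subsingleton) :
      s.ncard = 0 ∨ s.ncard = 1 ∨ s.ncard = 3 := by
    have := ncard_le_one_iff_subsingleton.mpr hs
    omega
  rcases eq_or_ne a 0 with rfl | ha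
  · rcases eq_or_ne b 0 with rfl | hb
    · have hc : c ≠ 0 := fun hc ↦ habc ⟨rfl, rfl, hc⟩
      exact of_subsingleton fun x hx ↦ absurd (by simpa using hx.2) hc
    · exact of_subsingleton (nonzero_roots_subsingleton_of_lead_eq_zero hb)
  rcases eq_or_ne c 0 with rfl | hc
  · exact of_subsingleton (nonzero_roots_subsingleton_of_const_eq_zero ha)
  rw [← ncard_image_of_injective _ inv_injective, inv_image_nonzero_roots ha hc]
  exact ncard_trinomialRoots_eq_zero_or_one_or_three hQ (div_ne_zero ha hc)

theorem stmt9 (m h : ℕ) (hm : 0 < m) (hh : 0 < h) (hgcd : Nat.gcd h m = 1)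
    (F : Type*) [Field F] [Fintype F] (hF : Fintype.card F = 2 ^ m)
    (a b c : F) (habc : ¬(a = 0 ∧ b = 0 ∧ c = 0))
    (N : ℕ)
    (hN : N = {x : F | x ≠ 0 ∧ a * x ^ (2 ^ h + 1) + b * x ^ 2 ^ h + c = 0}.ncard) :
    N = 0 ∨ N = 1 ∨ N = 3 :=
  stmt9_general m h hgcd F hF a b c habc N hN
end

section
/- Let q = 2^m with m odd and m > 3. For pairwise distinct x_1, x_2, x_3, x_4 in F_q^*, the 4×4 determinant of the matrix with rows (1,1,1,1), (x_1,x_2,x_3,x_4), (x_1^3,x_2^3,x_3^3,x_4^3), (x_1^4,x_2^4,x_3^4,x_4^4) vanishes if and only if x_1x_2 + x_1x_3 + x_2x_3 + (x_1+x_2+x_3)x_4 = 0. -/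
/-! The matrix is the generalized Vandermonde matrix with exponents `0, 1, 3, 4`, so its
determinant is the Vandermonde determinant times the Schur polynomial of the partition `(1, 1)`,
namely the elementary symmetric polynomial `e₂`. For distinct entries of a field the Vandermonde
factor is nonzero. -/

theorem det_vandermonde_exponents_0134 {R : Type*} [CommRing R] (a b c d : R) :
    Matrix.det !![1, 1, 1, 1;
                  a, b, c, d;
                  a^3, b^3, c^3, d^3;
                  a^4, b^4, c^4, d^4] =
      (b - a) * (c - a) * (d - a) * (c - b) * (d - b) * (d - c) *
        (a * b + a * c + b * c + (a + b + c) * d) := by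
  rw [Matrix.det_succ_row_zero, Fin.sum_univ_four]
  simp only [Matrix.det_fin_three, Matrix.submatrix_apply, Matrix.of_apply, Matrix.cons_val',
    Matrix.cons_val_fin_one, Matrix.cons_val, Fin.succAbove, Fin.reduceSucc, Fin.reduceCastSucc,
    Fin.reduceLT, Fin.isValue, ↓reduceIte, Fin.coe_ofNat_eq_mod]
  ring

theorem vandermonde_prod_four_ne_zero {R : Type*} [CommRing R] [NoZeroDivisors R] {a b c d : R}
    (hab : a ≠ b) (hac : a ≠ c) (had : a ≠ d) (hbc : b ≠ c) (hbd : b ≠ d) (hcd : c ≠ d) :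
    (b - a) * (c - a) * (d - a) * (c - b) * (d - b) * (d - c) ≠ 0 := by
  simp only [ne_eq, mul_eq_zero, sub_eq_zero, not_or]
  exact ⟨⟨⟨⟨⟨hab.symm, hac.symm⟩, had.symm⟩, hbc.symm⟩, hbd.symm⟩, hcd.symm⟩

theorem stmt11_general
    (F : Type*) [Field F]
    (x₁ x₂ x₃ x₄ : F)
    (hd : x₁ ≠ x₂ ∧ x₁ ≠ x₃ ∧ x₁ ≠ x₄ ∧ x₂ ≠ x₃ ∧ x₂ ≠ x₄ ∧ x₃ ≠ x₄) :
    Matrix.det !![1, 1, 1, 1;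
                  x₁, x₂, x₃, x₄;
                  x₁^3, x₂^3, x₃^3, x₄^3;
                  x₁^4, x₂^4, x₃^4, x₄^4] = 0 ↔
    x₁ * x₂ + x₁ * x₃ + x₂ * x₃ + (x₁ + x₂ + x₃) * x₄ = 0 := by
  obtain ⟨h12, h13, h14, h23, h24, h34⟩ := hd
  rw [det_vandermonde_exponents_0134,
    mul_eq_zero_iff_left (vandermonde_prod_four_ne_zero h12 h13 h14 h23 h24 h34)]

theorem stmt11 (m : ℕ) (hm : 3 < m) (hmo : Odd m)
    (F : Type*) [Field F] [Fintype F] (hF : Fintype.card F = 2 ^ m)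
    (x₁ x₂ x₃ x₄ : F)
    (h0 : x₁ ≠ 0 ∧ x₂ ≠ 0 ∧ x₃ ≠ 0 ∧ x₄ ≠ 0)
    (hd : x₁ ≠ x₂ ∧ x₁ ≠ x₃ ∧ x₁ ≠ x₄ ∧ x₂ ≠ x₃ ∧ x₂ ≠ x₄ ∧ x₃ ≠ x₄) :
    Matrix.det !![1, 1, 1, 1;
                  x₁, x₂, x₃, x₄;
                  x₁^3, x₂^3, x₃^3, x₄^3;
                  x₁^4, x₂^4, x₃^4, x₄^4] = 0 ↔
    x₁ * x₂ + x₁ * x₃ + x₂ * x₃ + (x₁ + x₂ + x₃) * x₄ = 0 :=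
  stmt11_general F x₁ x₂ x₃ x₄ hd
end

section
/- Let q = 2^m with m odd and m > 3. For any two distinct fixed elements x_1, x_2 ∈ F_q^*, the number of unordered pairs {x_3, x_4} of distinct elements of F_q^* \ {x_1, x_2} such that the 4×4 matrix with rows (1,1,1,1), (x_1,x_2,x_3,x_4), (x_1^3,...,x_4^3), (x_1^4,...,x_4^4) is singular equals (q-8)/2. -/
/-!
Dividing out the Vandermonde factor, the determinant vanishes iff
`e₂(x₁, x₂, x₃, x₄) = 0`, i.e. iff `(x₃ + a)(x₄ + a) = c` with `a = x₁ + x₂` and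
`c = x₁² + x₁x₂ + x₂²`. In characteristic 2 the shift `y = x₃ + a` sends the forbidden
values `0, x₂, x₁` to `S = {a, x₁, x₂}`, so we are counting the two-element orbits of the
involution `y ↦ c / y` that avoid `S`. As `m` is odd, `3 ∤ q - 1`, so cubing is injective
and `c ≠ 0`; moreover no product of two elements of `S` equals `c`. Hence `0`, `√c`, `S`
and `c / S` are eight distinct points, and the remaining `q - 8` points split into
`(q - 8) / 2` orbits.
-/

open Finset

theorem two_mul_card_image_pair {α : Type*} [DecidableEq α] {T : Finset α} {σ : α → α}
    (hσ : Function.Involutive σ) (hmaps : ∀ x ∈ T, σ x ∈ T) (hfix : ∀ x ∈ T, σ x ≠ x) :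
    2 * #(T.image fun x => ({x, σ x} : Finset α)) = #T := by
  rw [card_eq_sum_card_image (fun x => ({x, σ x} : Finset α)) T, mul_comm]
  refine (sum_const_nat fun p hp => ?_).symm
  obtain ⟨y, hy, rfl⟩ := mem_image.1 hp
  have hfiber : {x ∈ T | ({x, σ x} : Finset α) = {y, σ y}} = {y, σ y} := by
    ext x
    simp only [mem_filter, mem_insert, mem_singleton]
    constructor
    · rintro ⟨-, hxy⟩
      simpa [hxy] using mem_insert_self x {σ x}
    · rintro (rfl | rfl)
      · exact ⟨hy, rfl⟩
      · exact ⟨hmaps y hy, by rw [hσ y, pair_comm]⟩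
  rw [hfiber, card_pair (hfix y hy).symm]

theorem ncard_setOf_pair_add {G : Type*} [AddGroup G] [DecidableEq G] (R : G → G → Prop)
    (a : G) :
    {p : Finset G | ∃ y z, p = {y, z} ∧ R (y + a) (z + a)}.ncard =
      {p : Finset G | ∃ y z, p = {y, z} ∧ R y z}.ncard := by
  let e := Equiv.finsetCongr (Equiv.addRight a)
  have hpre : {p : Finset G | ∃ y z, p = {y, z} ∧ R (y + a) (z + a)} =
      e ⁻¹' {p | ∃ y z, p = {y, z} ∧ R y z} := by
    ext p
    simp only [Set.mem_ofPred_eq, Set.mem_preimage, ← Equiv.eq_symm_apply]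
    constructor
    · rintro ⟨y, z, rfl, h⟩
      exact ⟨y + a, z + a, by simp [e], h⟩
    · rintro ⟨y, z, rfl, h⟩
      exact ⟨y - a, z - a, by simp [e, sub_eq_add_neg], by simpa using h⟩
  rw [hpre, Set.ncard_preimage_of_injective_subset_range e.injective (by simp)]

theorem not_three_dvd_two_pow_sub_one {m : ℕ} (hm : Odd m) : ¬3 ∣ 2 ^ m - 1 := by
  obtain ⟨k, rfl⟩ := hm
  have h4 : 4 ^ k % 3 = 1 := by rw [Nat.pow_mod]; simp
  have h2 : 2 ^ (2 * k + 1) = 4 ^ k * 2 := by rw [pow_succ, pow_mul]; norm_num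
  rw [h2]
  omega

theorem sq_add_mul_add_sq_ne_zero {F : Type*} [Field F] [Fintype F]
    (h3 : ¬3 ∣ Fintype.card F - 1) {x y : F} (hxy : x ≠ y) : x ^ 2 + x * y + y ^ 2 ≠ 0 := by
  intro h
  have hy : y ≠ 0 := by rintro rfl; exact hxy (by simpa using h)
  have hcube : (x / y) ^ 3 = 1 := by
    rw [div_pow, div_eq_one_iff_eq (pow_ne_zero 3 hy)]
    linear_combination (x - y) * h
  have hcop : Nat.Coprime 3 (Fintype.card F - 1) :=
    (Nat.Prime.coprime_iff_not_dvd Nat.prime_three).2 h3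
  have ht0 : x / y ≠ 0 := fun h0 => by simp [h0] at hcube
  have hone : (x / y) ^ Nat.gcd 3 (Fintype.card F - 1) = 1 :=
    pow_gcd_eq_one.2 ⟨hcube, FiniteField.pow_card_sub_one_eq_one _ ht0⟩
  rw [hcop, pow_one, div_eq_one_iff_eq hy] at hone
  exact hxy hone

theorem card_filter_sq_eq_eq_one {F : Type*} [Field F] [Fintype F] [DecidableEq F] [CharP F 2]
    (c : F) : #{y | y ^ 2 = c} = 1 := by
  obtain ⟨r, rfl⟩ := FiniteField.isSquare_of_char_two (ringChar.eq F 2) c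
  refine card_eq_one.2 ⟨r, ?_⟩
  ext y
  simp only [mem_filter, mem_univ, true_and, mem_singleton, ← sq]
  exact (frobenius_inj F 2).eq_iff

theorem div_sq_eq_iff_sq_eq {F : Type*} [Field F] {c y : F} (hc : c ≠ 0) (hy : y ≠ 0) :
    (c / y) ^ 2 = c ↔ y ^ 2 = c := by
  rw [div_pow, div_eq_iff (pow_ne_zero 2 hy), sq c, mul_right_inj' hc, eq_comm]

theorem card_filter_ne_zero_sq_ne_add {F : Type*} [Field F] [Fintype F] [DecidableEq F]
    {c : F} (hc : c ≠ 0) :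
    #{y | y ≠ 0 ∧ y ^ 2 ≠ c} + #{y | y ^ 2 = c} + 1 = Fintype.card F := by
  have hcompl : ({y | ¬y ^ 2 = c} : Finset F) = insert 0 ({y | y ≠ 0 ∧ y ^ 2 ≠ c} : Finset F) := by
    ext y
    rcases eq_or_ne y 0 with rfl | hy <;> simp [*, Ne.symm hc]
  have hsplit := card_filter_add_card_filter_not (s := univ) (fun y : F => y ^ 2 = c)
  rw [hcompl, card_insert_of_notMem (by simp), card_univ] at hsplit
  omega

theorem card_filter_notMem_add_two_mul_card {F : Type*} [Field F] [Fintype F] [DecidableEq F]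
    {c : F} (hc : c ≠ 0) {S : Finset F} (hS0 : 0 ∉ S) (hS : ∀ s ∈ S, ∀ t ∈ S, s * t ≠ c) :
    #{y | y ≠ 0 ∧ y ^ 2 ≠ c ∧ y ∉ S ∧ c / y ∉ S} + 2 * #S = #{y | y ≠ 0 ∧ y ^ 2 ≠ c} := by
  have hι : Function.Involutive (c / · : F → F) := fun y => div_div_cancel₀ hc
  have hsdiff : ({y | y ≠ 0 ∧ y ^ 2 ≠ c ∧ y ∉ S ∧ c / y ∉ S} : Finset F) =
      ({y | y ≠ 0 ∧ y ^ 2 ≠ c} : Finset F) \ (S ∪ S.image (c / ·)) := by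
    ext y
    simp only [mem_sdiff, mem_filter, mem_univ, true_and, mem_union, mem_image, hι.eq_iff,
      exists_eq_right]
    tauto
  have hsub : S ∪ S.image (c / ·) ⊆ ({y | y ≠ 0 ∧ y ^ 2 ≠ c} : Finset F) := by
    intro y hy
    simp only [mem_filter, mem_univ, true_and]
    rcases mem_union.1 hy with hy | hy
    · exact ⟨ne_of_mem_of_not_mem hy hS0, by rw [sq]; exact hS y hy y hy⟩
    · obtain ⟨t, ht, rfl⟩ := mem_image.1 hy
      have ht0 := ne_of_mem_of_not_mem ht hS0
      exact ⟨div_ne_zero hc ht0,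
        (div_sq_eq_iff_sq_eq hc ht0).not.2 (by rw [sq]; exact hS t ht t ht)⟩
  have hcard : #(S ∪ S.image (c / ·)) = 2 * #S := by
    rw [card_union_of_disjoint, card_image_of_injective _ hι.injective, two_mul]
    rw [disjoint_right]
    intro _ hx hs
    obtain ⟨t, ht, rfl⟩ := mem_image.1 hx
    exact hS _ hs t ht (div_mul_cancel₀ c (ne_of_mem_of_not_mem ht hS0))
  rw [hsdiff, ← hcard, card_sdiff_add_card_eq_card hsub]

theorem two_mul_ncard_setOf_pair_mul_eq {F : Type*} [Field F] [Fintype F] [DecidableEq F]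
    {c : F} (hc : c ≠ 0) {S : Finset F} (hS0 : 0 ∉ S) (hS : ∀ s ∈ S, ∀ t ∈ S, s * t ≠ c) :
    2 * {p : Finset F | ∃ y z, p = {y, z} ∧ y ≠ z ∧ y ∉ S ∧ z ∉ S ∧ y * z = c}.ncard +
      #{y | y ^ 2 = c} + 2 * #S + 1 = Fintype.card F := by
  let T : Finset F := {y | y ≠ 0 ∧ y ^ 2 ≠ c ∧ y ∉ S ∧ c / y ∉ S}
  have hmemT : ∀ y, y ∈ T ↔ y ≠ 0 ∧ y ^ 2 ≠ c ∧ y ∉ S ∧ c / y ∉ S := by simp [T]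
  have hpairs : {p : Finset F | ∃ y z, p = {y, z} ∧ y ≠ z ∧ y ∉ S ∧ z ∉ S ∧ y * z = c} =
      T.image fun y => ({y, c / y} : Finset F) := by
    ext p
    simp only [Set.mem_ofPred_eq, coe_image, Set.mem_image, mem_coe, hmemT]
    constructor
    · rintro ⟨y, z, rfl, hyz, hy, hz, rfl⟩
      have hy0 : y ≠ 0 := by rintro rfl; exact hc (zero_mul z)
      refine ⟨y, ⟨hy0, fun h => hyz ?_, hy, by rwa [mul_div_cancel_left₀ z hy0]⟩,
        by rw [mul_div_cancel_left₀ z hy0]⟩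
      exact mul_left_cancel₀ hy0 (by rw [← sq, h])
    · rintro ⟨y, ⟨hy0, hyc, hy, hcy⟩, rfl⟩
      refine ⟨y, c / y, rfl, fun h => hyc ?_, hy, hcy, mul_div_cancel₀ c hy0⟩
      rw [sq]
      nth_rw 2 [h]
      exact mul_div_cancel₀ c hy0
  have hT : 2 * #(T.image fun y => ({y, c / y} : Finset F)) = #T := by
    refine two_mul_card_image_pair (fun y => div_div_cancel₀ hc) (fun y hy => ?_)
      (fun y hy h => ?_)
    · obtain ⟨hy0, hyc, hy, hcy⟩ := (hmemT y).1 hy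
      exact (hmemT _).2 ⟨div_ne_zero hc hy0, (div_sq_eq_iff_sq_eq hc hy0).not.2 hyc, hcy,
        by rwa [div_div_cancel₀ hc]⟩
    · rw [hmemT] at hy
      exact hy.2.1 (by rw [sq]; nth_rw 1 [← h]; exact div_mul_cancel₀ c hy.1)
  rw [hpairs, Set.ncard_coe_finset, hT, ← card_filter_ne_zero_sq_ne_add hc,
    ← card_filter_notMem_add_two_mul_card hc hS0 hS]
  ring

/-- In characteristic 2, `s * t + (x² + xy + y²)` is one of the nonzero elements `xy`, `x²`,
`y²`, `x(x + y)`, `y(x + y)`, `(x + y)²`. -/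
theorem mul_ne_sq_add_mul_add_sq {F : Type*} [Field F] [DecidableEq F] [CharP F 2] {x y : F}
    (hx : x ≠ 0) (hy : y ≠ 0) (hxy : x ≠ y) :
    ∀ s ∈ ({x + y, x, y} : Finset F), ∀ t ∈ ({x + y, x, y} : Finset F),
      s * t ≠ x ^ 2 + x * y + y ^ 2 := by
  simp only [mem_insert, mem_singleton, forall_eq_or_imp, forall_eq]
  refine ⟨⟨?_, ?_, ?_⟩, ⟨?_, ?_, ?_⟩, ⟨?_, ?_, ?_⟩⟩ <;> grind

/-- The exponents `0, 1, 3, 4` are `(0, 1, 2, 3) + (0, 0, 1, 1)`, so the cofactor of the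
Vandermonde determinant is the Schur polynomial `s₍₁,₁₎ = e₂`. -/
theorem det_pow_zero_one_three_four {R : Type*} [CommRing R] (x₁ x₂ x₃ x₄ : R) :
    Matrix.det !![1, 1, 1, 1;
                  x₁, x₂, x₃, x₄;
                  x₁^3, x₂^3, x₃^3, x₄^3;
                  x₁^4, x₂^4, x₃^4, x₄^4] =
      (x₂ - x₁) * (x₃ - x₁) * (x₄ - x₁) * (x₃ - x₂) * (x₄ - x₂) * (x₄ - x₃) *
        (x₁ * x₂ + x₁ * x₃ + x₁ * x₄ + x₂ * x₃ + x₂ * x₄ + x₃ * x₄) := by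
  simp [Matrix.det_succ_row_zero, Fin.sum_univ_succ, Fin.succAbove, Matrix.cons_val_succ,
    Fin.castSucc, Fin.castAdd, Fin.castLE]
  ring

theorem det_pow_zero_one_three_four_eq_zero_iff {R : Type*} [CommRing R] [IsDomain R]
    {x₁ x₂ x₃ x₄ : R} (h12 : x₁ ≠ x₂) (h13 : x₁ ≠ x₃) (h14 : x₁ ≠ x₄) (h23 : x₂ ≠ x₃)
    (h24 : x₂ ≠ x₄) (h34 : x₃ ≠ x₄) :
    Matrix.det !![1, 1, 1, 1;
                  x₁, x₂, x₃, x₄;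
                  x₁^3, x₂^3, x₃^3, x₄^3;
                  x₁^4, x₂^4, x₃^4, x₄^4] = 0 ↔
      (x₃ + (x₁ + x₂)) * (x₄ + (x₁ + x₂)) = x₁ ^ 2 + x₁ * x₂ + x₂ ^ 2 := by
  rw [det_pow_zero_one_three_four, ← sub_eq_zero (a := _ * _)]
  simp only [mul_eq_zero, sub_eq_zero, h12.symm, h13.symm, h14.symm, h23.symm, h24.symm,
    h34.symm, false_or]
  constructor <;> intro h <;> linear_combination h

theorem ncard_setOf_det_eq_zero {R : Type*} [CommRing R] [IsDomain R] [DecidableEq R]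
    [CharP R 2] {x₁ x₂ : R} (h12 : x₁ ≠ x₂) :
    {s : Finset R | ∃ x₃ x₄ : R, s = {x₃, x₄} ∧ x₃ ≠ x₄ ∧
      x₃ ≠ 0 ∧ x₄ ≠ 0 ∧ x₃ ≠ x₁ ∧ x₃ ≠ x₂ ∧ x₄ ≠ x₁ ∧ x₄ ≠ x₂ ∧
      Matrix.det !![1, 1, 1, 1;
                    x₁, x₂, x₃, x₄;
                    x₁^3, x₂^3, x₃^3, x₄^3;
                    x₁^4, x₂^4, x₃^4, x₄^4] = 0}.ncard =
      {p : Finset R | ∃ y z, p = {y, z} ∧ y ≠ z ∧ y ∉ ({x₁ + x₂, x₁, x₂} : Finset R) ∧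
        z ∉ ({x₁ + x₂, x₁, x₂} : Finset R) ∧ y * z = x₁ ^ 2 + x₁ * x₂ + x₂ ^ 2}.ncard := by
  rw [← ncard_setOf_pair_add (fun y z => y ≠ z ∧ y ∉ ({x₁ + x₂, x₁, x₂} : Finset R) ∧
    z ∉ ({x₁ + x₂, x₁, x₂} : Finset R) ∧ y * z = x₁ ^ 2 + x₁ * x₂ + x₂ ^ 2) (x₁ + x₂)]
  have hmem : ∀ x, x + (x₁ + x₂) ∈ ({x₁ + x₂, x₁, x₂} : Finset R) ↔
      x = 0 ∨ x = x₂ ∨ x = x₁ := by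
    intro x
    simp only [mem_insert, mem_singleton]
    grind
  congr 1
  ext p
  refine exists₂_congr fun x₃ x₄ => and_congr_right fun _ => ?_
  simp only [hmem, ne_eq, add_left_inj, not_or]
  constructor
  · rintro ⟨h34, h30, h40, h31, h32, h41, h42, hdet⟩
    exact ⟨h34, ⟨h30, h32, h31⟩, ⟨h40, h42, h41⟩,
      (det_pow_zero_one_three_four_eq_zero_iff h12 (Ne.symm h31) (Ne.symm h41)
        (Ne.symm h32) (Ne.symm h42) h34).1 hdet⟩
  · rintro ⟨h34, ⟨h30, h32, h31⟩, ⟨h40, h42, h41⟩, hdet⟩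
    exact ⟨h34, h30, h40, h31, h32, h41, h42,
      (det_pow_zero_one_three_four_eq_zero_iff h12 (Ne.symm h31) (Ne.symm h41)
        (Ne.symm h32) (Ne.symm h42) h34).2 hdet⟩

theorem stmt12_general (m : ℕ) (hmo : Odd m)
    (F : Type*) [Field F] [Fintype F] [DecidableEq F]
    (hF : Fintype.card F = 2 ^ m)
    (x₁ x₂ : F) (h1 : x₁ ≠ 0) (h2 : x₂ ≠ 0) (h12 : x₁ ≠ x₂) :
    {s : Finset F | ∃ x₃ x₄ : F, s = {x₃, x₄} ∧ x₃ ≠ x₄ ∧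
      x₃ ≠ 0 ∧ x₄ ≠ 0 ∧ x₃ ≠ x₁ ∧ x₃ ≠ x₂ ∧ x₄ ≠ x₁ ∧ x₄ ≠ x₂ ∧
      Matrix.det !![1, 1, 1, 1;
                    x₁, x₂, x₃, x₄;
                    x₁^3, x₂^3, x₃^3, x₄^3;
                    x₁^4, x₂^4, x₃^4, x₄^4] = 0}.ncard
      = (2 ^ m - 8) / 2 := by
  have : CharP F 2 := ringChar.of_eq <| by
    rw [FiniteField.even_card_iff_char_two, hF, Nat.pow_mod]
    simp [hmo.pos.ne']
  have hc : x₁ ^ 2 + x₁ * x₂ + x₂ ^ 2 ≠ 0 :=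
    sq_add_mul_add_sq_ne_zero (by rw [hF]; exact not_three_dvd_two_pow_sub_one hmo) h12
  have hS0 : (0 : F) ∉ ({x₁ + x₂, x₁, x₂} : Finset F) := by
    simp only [mem_insert, mem_singleton]
    grind
  have hS : #({x₁ + x₂, x₁, x₂} : Finset F) = 3 :=
    card_eq_three.2 ⟨_, _, _, by grind, by grind, h12, rfl⟩
  have hcount := two_mul_ncard_setOf_pair_mul_eq hc hS0 (mul_ne_sq_add_mul_add_sq h1 h2 h12)
  rw [card_filter_sq_eq_eq_one, hS, hF] at hcount
  rw [ncard_setOf_det_eq_zero h12]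
  omega

theorem stmt12 (m : ℕ) (hm : 3 < m) (hmo : Odd m)
    (F : Type*) [Field F] [Fintype F] [DecidableEq F]
    (hF : Fintype.card F = 2 ^ m)
    (x₁ x₂ : F) (h1 : x₁ ≠ 0) (h2 : x₂ ≠ 0) (h12 : x₁ ≠ x₂) :
    {s : Finset F | ∃ x₃ x₄ : F, s = {x₃, x₄} ∧ x₃ ≠ x₄ ∧
      x₃ ≠ 0 ∧ x₄ ≠ 0 ∧ x₃ ≠ x₁ ∧ x₃ ≠ x₂ ∧ x₄ ≠ x₁ ∧ x₄ ≠ x₂ ∧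
      Matrix.det !![1, 1, 1, 1;
                    x₁, x₂, x₃, x₄;
                    x₁^3, x₂^3, x₃^3, x₄^3;
                    x₁^4, x₂^4, x₃^4, x₄^4] = 0}.ncard
      = (2 ^ m - 8) / 2 :=
  stmt12_general m hmo F hF x₁ x₂ h1 h2 h12
end

section
/- Let q = 2^m with m > 3. For any two distinct fixed elements x_1, x_2 ∈ F_q^*, the number of unordered triples {x_3, x_4, x_5} such that x_1, ..., x_5 are pairwise distinct nonzero elements of F_q and the 5×5 matrix with rows given by the 0th, 2nd, 3rd, 4th, 5th powers of x_1, ..., x_5 is singular equals (q-4)(q-8)/6. -/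
/-!
Since the `xᵢ` are distinct and nonzero, the determinant is `e₄(x₁, …, x₅)` times a nonvanishing
Vandermonde product, and `e₄ = x₁ ⋯ x₅ · ∑ xᵢ⁻¹`. So in characteristic 2, with `yᵢ = xᵢ⁻¹`,
singularity means `y₃ + y₄ + y₅ = y₁ + y₂`. As `{0, y₁, y₂, y₁ + y₂}` is a subgroup `H`, we are
counting 3-subsets of `F ∖ H` with sum `c = y₁ + y₂ ∈ H`. Such a subset `{a, b, c + a + b}` is
determined by any ordered pair `(a, b)` of its elements, and these pairs are exactly those with
`a ∉ H` and `b ∉ H ∪ (a + H)`: there are `(q - 4)(q - 8)` of them, six per subset.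
-/

open Finset
open scoped Pointwise

theorem Finset.eq_insert_insert_sum_sub {G : Type*} [AddCommGroup G] [DecidableEq G]
    {s : Finset G} (hs : #s = 3) {a b : G} (ha : a ∈ s) (hb : b ∈ s) (hab : a ≠ b) :
    s = {a, b, ∑ x ∈ s, x - a - b} := by
  have hb' : b ∈ s.erase a := mem_erase.2 ⟨hab.symm, hb⟩
  obtain ⟨d, hd⟩ := card_eq_one.1 <|
    show #((s.erase a).erase b) = 1 by rw [card_erase_of_mem hb', card_erase_of_mem ha, hs]
  have hsum : ∑ x ∈ s, x = a + (b + d) := by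
    rw [← add_sum_erase s _ ha, ← add_sum_erase _ _ hb', hd, sum_singleton]
  rw [hsum, show a + (b + d) - a - b = d by abel, ← hd, insert_erase hb', insert_erase ha]

section SumTriples

variable {G : Type*} [AddCommGroup G] {H : Finset G}

theorem add_mem_iff_of_add_self (hG : ∀ x : G, x + x = 0) (hH : ∀ x ∈ H, ∀ y ∈ H, x + y ∈ H)
    {x y : G} (hx : x ∈ H) : x + y ∈ H ↔ y ∈ H :=
  ⟨fun h => by simpa [← add_assoc, hG] using hH x hx _ h, hH x hx y⟩

theorem ne_of_add_notMem (hG : ∀ x : G, x + x = 0) (hH : ∀ x ∈ H, ∀ y ∈ H, x + y ∈ H)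
    {c a b : G} (hc : c ∈ H) (hab : a + b ∉ H) : a ≠ b := by
  rintro rfl
  exact hab (hG a ▸ hG c ▸ hH c hc c hc)

variable [DecidableEq G] [Fintype G]

def sumTriples (H : Finset G) (c : G) : Finset (Finset G) :=
  {s ∈ univ.powersetCard 3 | Disjoint s H ∧ ∑ x ∈ s, x = c}

theorem insert_insert_singleton_mem_sumTriples_iff {c a b d : G} (hab : a ≠ b) (had : a ≠ d)
    (hbd : b ≠ d) :
    {a, b, d} ∈ sumTriples H c ↔ a ∉ H ∧ b ∉ H ∧ d ∉ H ∧ a + b + d = c := by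
  simp [sumTriples, hab, had, hbd, add_assoc, and_assoc]

def admissiblePairs (H : Finset G) : Finset (G × G) :=
  {p ∈ Hᶜ ×ˢ univ | p.2 ∉ H ∧ p.1 + p.2 ∉ H}

theorem mem_admissiblePairs {a b : G} :
    (a, b) ∈ admissiblePairs H ↔ a ∉ H ∧ b ∉ H ∧ a + b ∉ H := by
  simp [admissiblePairs]

theorem card_filter_notMem_and_add_notMem (hG : ∀ x : G, x + x = 0)
    (hH : ∀ x ∈ H, ∀ y ∈ H, x + y ∈ H) {a : G} (ha : a ∉ H) :
    #{b | b ∉ H ∧ a + b ∉ H} = Fintype.card G - 2 * #H := by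
  have hmem_image : ∀ b, b ∈ H.image (a + ·) ↔ a + b ∈ H := fun b => by
    rw [mem_image]
    refine ⟨?_, fun h => ⟨a + b, h, by simp [← add_assoc, hG]⟩⟩
    rintro ⟨y, hy, rfl⟩
    simpa [← add_assoc, hG] using hy
  have hdisj : Disjoint H (H.image (a + ·)) := by
    refine disjoint_left.2 fun b hb hab => ha ?_
    have := (hmem_image b).1 hab
    rwa [add_comm, add_mem_iff_of_add_self hG hH hb] at this
  have hfilter : ({b | b ∉ H ∧ a + b ∉ H} : Finset G) = (H ∪ H.image (a + ·))ᶜ := by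
    ext b
    simp only [mem_filter, mem_univ, true_and, mem_compl, mem_union, hmem_image, not_or]
  rw [hfilter, card_compl, card_union_of_disjoint hdisj,
    card_image_of_injective _ (add_right_injective a), two_mul]

theorem card_admissiblePairs (hG : ∀ x : G, x + x = 0) (hH : ∀ x ∈ H, ∀ y ∈ H, x + y ∈ H) :
    #(admissiblePairs H) = (Fintype.card G - #H) * (Fintype.card G - 2 * #H) :=
  calc #(admissiblePairs H) = ∑ a ∈ Hᶜ, #{b | b ∉ H ∧ a + b ∉ H} := by
        rw [admissiblePairs, card_filter, sum_product]
        simp only [card_filter]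
    _ = ∑ a ∈ Hᶜ, (Fintype.card G - 2 * #H) :=
        sum_congr rfl fun a ha => card_filter_notMem_and_add_notMem hG hH (mem_compl.1 ha)
    _ = _ := by rw [sum_const, card_compl, smul_eq_mul]

theorem insert_insert_add_mem_sumTriples (hG : ∀ x : G, x + x = 0)
    (hH : ∀ x ∈ H, ∀ y ∈ H, x + y ∈ H) {c a b : G} (hc : c ∈ H)
    (hp : (a, b) ∈ admissiblePairs H) : {a, b, c + a + b} ∈ sumTriples H c := by
  obtain ⟨ha, hb, hab⟩ := mem_admissiblePairs.1 hp
  rw [insert_insert_singleton_mem_sumTriples_iff (ne_of_add_notMem hG hH hc hab)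
    (by grind [hG c]) (by grind [hG c])]
  exact ⟨ha, hb, by rwa [add_assoc, add_mem_iff_of_add_self hG hH hc], by grind [hG a, hG b]⟩

theorem filter_admissiblePairs_eq_offDiag (hG : ∀ x : G, x + x = 0)
    (hH : ∀ x ∈ H, ∀ y ∈ H, x + y ∈ H) {c : G} (hc : c ∈ H) {s : Finset G}
    (hs : s ∈ sumTriples H c) :
    {p ∈ admissiblePairs H | {p.1, p.2, c + p.1 + p.2} = s} = s.offDiag := by
  simp only [sumTriples, mem_filter, mem_powersetCard] at hs
  obtain ⟨⟨-, hs3⟩, hdisj, hsum⟩ := hs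
  ext ⟨a, b⟩
  simp only [mem_filter, mem_admissiblePairs, mem_offDiag]
  constructor
  · rintro ⟨⟨-, -, hab⟩, rfl⟩
    simp [ne_of_add_notMem hG hH hc hab]
  · rintro ⟨ha, hb, hab⟩
    have hs' := Finset.eq_insert_insert_sum_sub hs3 ha hb hab
    rw [hsum, show c - a - b = c + a + b by grind [hG a, hG b]] at hs'
    refine ⟨⟨disjoint_left.1 hdisj ha, disjoint_left.1 hdisj hb, fun h => ?_⟩, hs'.symm⟩
    refine disjoint_left.1 hdisj (?_ : c + a + b ∈ s) ?_
    · rw [hs']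
      simp
    · rwa [add_assoc, add_mem_iff_of_add_self hG hH hc]

theorem six_mul_card_sumTriples (hG : ∀ x : G, x + x = 0)
    (hH : ∀ x ∈ H, ∀ y ∈ H, x + y ∈ H) {c : G} (hc : c ∈ H) :
    6 * #(sumTriples H c) = (Fintype.card G - #H) * (Fintype.card G - 2 * #H) := by
  rw [← card_admissiblePairs hG hH, card_eq_sum_card_fiberwise fun p hp =>
      insert_insert_add_mem_sumTriples hG hH hc hp,
    sum_congr rfl fun s hs => by
      rw [filter_admissiblePairs_eq_offDiag hG hH hc hs, offDiag_card,
        (mem_powersetCard.1 (mem_filter.1 hs).1).2],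
    sum_const, smul_eq_mul, mul_comm]

theorem six_mul_card_sumTriples_klein (hG : ∀ x : G, x + x = 0) {y₁ y₂ : G} (h1 : y₁ ≠ 0)
    (h2 : y₂ ≠ 0) (h12 : y₁ ≠ y₂) :
    6 * #(sumTriples {0, y₁, y₂, y₁ + y₂} (y₁ + y₂)) =
      (Fintype.card G - 4) * (Fintype.card G - 8) := by
  have hy₁ := hG y₁
  have hy₂ := hG y₂
  have hcard : #({0, y₁, y₂, y₁ + y₂} : Finset G) = 4 :=
    card_eq_four.2 ⟨0, y₁, y₂, y₁ + y₂, h1.symm, h2.symm, by grind, h12, by grind, by grind, rfl⟩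
  have hclosed : ∀ x ∈ ({0, y₁, y₂, y₁ + y₂} : Finset G),
      ∀ y ∈ ({0, y₁, y₂, y₁ + y₂} : Finset G), x + y ∈ ({0, y₁, y₂, y₁ + y₂} : Finset G) := by
    simp only [mem_insert, mem_singleton]
    rintro x (rfl | rfl | rfl | rfl) y (rfl | rfl | rfl | rfl) <;> grind
  simpa [hcard] using six_mul_card_sumTriples hG hclosed (by simp)

end SumTriples

def vandermondeSkipLinear {R : Type*} [CommRing R] (a b c d e : R) : Matrix (Fin 5) (Fin 5) R :=
  !![1, 1, 1, 1, 1;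
     a^2, b^2, c^2, d^2, e^2;
     a^3, b^3, c^3, d^3, e^3;
     a^4, b^4, c^4, d^4, e^4;
     a^5, b^5, c^5, d^5, e^5]

theorem det_vandermondeSkipLinear {R : Type*} [CommRing R] (a b c d e : R) :
    (vandermondeSkipLinear a b c d e).det =
      (a*b*c*d + a*b*c*e + a*b*d*e + a*c*d*e + b*c*d*e) *
      ((b-a)*(c-a)*(d-a)*(e-a)*(c-b)*(d-b)*(e-b)*(d-c)*(e-c)*(e-d)) := by
  simp [vandermondeSkipLinear, Matrix.det_succ_row_zero, Fin.sum_univ_succ, Fin.succAbove]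
  ring

section Field

variable {F : Type*} [Field F]

theorem det_vandermondeSkipLinear_of_ne_zero {a b c d e : F} (ha : a ≠ 0) (hb : b ≠ 0)
    (hc : c ≠ 0) (hd : d ≠ 0) (he : e ≠ 0) :
    (vandermondeSkipLinear a b c d e).det =
      (a⁻¹ + b⁻¹ + c⁻¹ + d⁻¹ + e⁻¹) * (a*b*c*d*e) *
      ((b-a)*(c-a)*(d-a)*(e-a)*(c-b)*(d-b)*(e-b)*(d-c)*(e-c)*(e-d)) := by
  have he₄ : a*b*c*d + a*b*c*e + a*b*d*e + a*c*d*e + b*c*d*e =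
      (a⁻¹ + b⁻¹ + c⁻¹ + d⁻¹ + e⁻¹) * (a*b*c*d*e) := by
    field_simp
    ring
  rw [det_vandermondeSkipLinear, he₄]

theorem add_self_eq_zero_of_card_eq_two_pow [Fintype F] {m : ℕ} (hF : Fintype.card F = 2 ^ m)
    (x : F) : x + x = 0 := by
  have h2 : (2 : F) = 0 := eq_zero_of_pow_eq_zero (n := m) <| by
    exact_mod_cast hF ▸ FiniteField.cast_card_eq_zero F
  rw [← two_mul, h2, zero_mul]

theorem inv_mem_sumTriples_iff [Fintype F] [DecidableEq F] (hG : ∀ x : F, x + x = 0)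
    {x₁ x₂ : F} (h1 : x₁ ≠ 0) (h2 : x₂ ≠ 0) (h12 : x₁ ≠ x₂) (s : Finset F) :
    s⁻¹ ∈ sumTriples {0, x₁⁻¹, x₂⁻¹, x₁⁻¹ + x₂⁻¹} (x₁⁻¹ + x₂⁻¹) ↔
      ∃ x₃ x₄ x₅ : F, s = {x₃, x₄, x₅} ∧ x₃ ≠ x₄ ∧ x₃ ≠ x₅ ∧ x₄ ≠ x₅ ∧
        x₃ ≠ 0 ∧ x₄ ≠ 0 ∧ x₅ ≠ 0 ∧
        x₃ ≠ x₁ ∧ x₃ ≠ x₂ ∧ x₄ ≠ x₁ ∧ x₄ ≠ x₂ ∧ x₅ ≠ x₁ ∧ x₅ ≠ x₂ ∧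
        (vandermondeSkipLinear x₁ x₂ x₃ x₄ x₅).det = 0 := by
  constructor
  · intro hs
    obtain ⟨u, v, w, huv, huw, hvw, hs'⟩ :=
      card_eq_three.1 (mem_powersetCard.1 (mem_filter.1 hs).1).2
    rw [hs', insert_insert_singleton_mem_sumTriples_iff huv huw hvw] at hs
    simp only [mem_insert, mem_singleton, not_or] at hs
    obtain ⟨⟨hu0, hu1, hu2, -⟩, ⟨hv0, hv1, hv2, -⟩, ⟨hw0, hw1, hw2, -⟩, hsum⟩ := hs
    refine ⟨u⁻¹, v⁻¹, w⁻¹, by rw [← inv_inv s, hs']; simp [inv_insert], ?_⟩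
    rw [det_vandermondeSkipLinear_of_ne_zero h1 h2 (inv_ne_zero hu0) (inv_ne_zero hv0)
      (inv_ne_zero hw0), inv_inv, inv_inv, inv_inv]
    simp only [ne_eq, inv_inj, inv_eq_zero]
    simp only [inv_eq_iff_eq_inv]
    refine ⟨huv, huw, hvw, hu0, hv0, hw0, hu1, hu2, hv1, hv2, hw1, hw2, ?_⟩
    exact mul_eq_zero_of_left (mul_eq_zero_of_left (by grind [hG x₁⁻¹, hG x₂⁻¹]) _) _
  · rintro ⟨x₃, x₄, x₅, rfl, h34, h35, h45, h3, h4, h5, h31, h32, h41, h42, h51, h52, hdet⟩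
    replace hdet : x₁⁻¹ + x₂⁻¹ + x₃⁻¹ + x₄⁻¹ + x₅⁻¹ = 0 := by
      rw [det_vandermondeSkipLinear_of_ne_zero h1 h2 h3 h4 h5] at hdet
      simpa [h1, h2, h3, h4, h5, sub_eq_zero, h12.symm, h31, h32, h41, h42, h51, h52, h34.symm,
        h35.symm, h45.symm] using hdet
    rw [inv_insert, inv_insert, inv_singleton, insert_insert_singleton_mem_sumTriples_iff
      (inv_injective.ne h34) (inv_injective.ne h35) (inv_injective.ne h45)]
    simp only [mem_insert, mem_singleton, not_or, inv_eq_zero, inv_inj]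
    refine ⟨⟨h3, h31, h32, ?_⟩, ⟨h4, h41, h42, ?_⟩, ⟨h5, h51, h52, ?_⟩, ?_⟩ <;>
      grind [hG x₁⁻¹, hG x₂⁻¹, hG x₃⁻¹, hG x₄⁻¹, hG x₅⁻¹]

end Field

theorem stmt14_general (m : ℕ)
    (F : Type*) [Field F] [Fintype F] [DecidableEq F]
    (hF : Fintype.card F = 2 ^ m)
    (x₁ x₂ : F) (h1 : x₁ ≠ 0) (h2 : x₂ ≠ 0) (h12 : x₁ ≠ x₂) :
    {s : Finset F | ∃ x₃ x₄ x₅ : F, s = {x₃, x₄, x₅} ∧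
      x₃ ≠ x₄ ∧ x₃ ≠ x₅ ∧ x₄ ≠ x₅ ∧
      x₃ ≠ 0 ∧ x₄ ≠ 0 ∧ x₅ ≠ 0 ∧
      x₃ ≠ x₁ ∧ x₃ ≠ x₂ ∧ x₄ ≠ x₁ ∧ x₄ ≠ x₂ ∧ x₅ ≠ x₁ ∧ x₅ ≠ x₂ ∧
      Matrix.det !![1, 1, 1, 1, 1;
                    x₁^2, x₂^2, x₃^2, x₄^2, x₅^2;
                    x₁^3, x₂^3, x₃^3, x₄^3, x₅^3;
                    x₁^4, x₂^4, x₃^4, x₄^4, x₅^4;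
                    x₁^5, x₂^5, x₃^5, x₄^5, x₅^5] = 0}.ncard
      = (2 ^ m - 4) * (2 ^ m - 8) / 6 := by
  have hG := add_self_eq_zero_of_card_eq_two_pow hF
  have hcount := six_mul_card_sumTriples_klein hG (inv_ne_zero h1) (inv_ne_zero h2)
    (inv_injective.ne h12)
  rw [hF] at hcount
  calc _ = ((sumTriples {0, x₁⁻¹, x₂⁻¹, x₁⁻¹ + x₂⁻¹} (x₁⁻¹ + x₂⁻¹) : Set (Finset F))⁻¹).ncard := by
        congr 1
        ext s
        exact (inv_mem_sumTriples_iff hG h1 h2 h12 s).symm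
    _ = _ := by
        rw [Set.ncard_inv, Set.ncard_coe_finset]
        exact Nat.eq_div_of_mul_eq_right (by norm_num) hcount

theorem stmt14 (m : ℕ) (hm : 3 < m)
    (F : Type*) [Field F] [Fintype F] [DecidableEq F]
    (hF : Fintype.card F = 2 ^ m)
    (x₁ x₂ : F) (h1 : x₁ ≠ 0) (h2 : x₂ ≠ 0) (h12 : x₁ ≠ x₂) :
    {s : Finset F | ∃ x₃ x₄ x₅ : F, s = {x₃, x₄, x₅} ∧
      x₃ ≠ x₄ ∧ x₃ ≠ x₅ ∧ x₄ ≠ x₅ ∧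
      x₃ ≠ 0 ∧ x₄ ≠ 0 ∧ x₅ ≠ 0 ∧
      x₃ ≠ x₁ ∧ x₃ ≠ x₂ ∧ x₄ ≠ x₁ ∧ x₄ ≠ x₂ ∧ x₅ ≠ x₁ ∧ x₅ ≠ x₂ ∧
      Matrix.det !![1, 1, 1, 1, 1;
                    x₁^2, x₂^2, x₃^2, x₄^2, x₅^2;
                    x₁^3, x₂^3, x₃^3, x₄^3, x₅^3;
                    x₁^4, x₂^4, x₃^4, x₄^4, x₅^4;
                    x₁^5, x₂^5, x₃^5, x₄^5, x₅^5] = 0}.ncard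
      = (2 ^ m - 4) * (2 ^ m - 8) / 6 :=
  stmt14_general m F hF x₁ x₂ h1 h2 h12
end

section
/- Let q = 2^m with m > 3. For any two distinct fixed elements x_1, x_2 ∈ F_q^*, the number of unordered triples {x_3, x_4, x_5} such that x_1, ..., x_5 are pairwise distinct nonzero elements of F_q and x_1 + x_2 + x_3 + x_4 + x_5 = 0 equals (q-4)(q-8)/6. -/
/-!
In characteristic 2 put `e = x₁ + x₂`. The condition says `x₃ + x₄ + x₅ = e`, which forces
`e ∉ {x₃, x₄, x₅}` (otherwise the other two coincide), so we count the 3-subsets with sum `e` of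
the complement of the Klein four-group `K = {0, x₁, x₂, e}`. Each of them arises from exactly six
ordered pairs `(u, v)` of its elements as `{u, v, u + v + e}`, and the pairs that arise are those
with `u`, `v` and `u + v` outside `K`: for fixed `u ∉ K` this excludes the two disjoint cosets `K`
and `u + K`. Hence `6 · #triples = (q - 4)(q - 8)`.
-/

open Finset

theorem Finset.exists_eq_triple_of_card_eq_three {α : Type*} [DecidableEq α] {s : Finset α}
    (hs : #s = 3) {u v : α} (hu : u ∈ s) (hv : v ∈ s) (huv : u ≠ v) :
    ∃ w, w ≠ u ∧ w ≠ v ∧ s = {u, v, w} := by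
  have hv' : v ∈ s.erase u := mem_erase.2 ⟨huv.symm, hv⟩
  obtain ⟨w, hw⟩ := card_eq_one.1
    (by rw [card_erase_of_mem hv', card_erase_of_mem hu, hs] : #((s.erase u).erase v) = 1)
  have hw' : w ∈ (s.erase u).erase v := hw ▸ mem_singleton_self w
  refine ⟨w, ne_of_mem_erase (mem_of_mem_erase hw'), ne_of_mem_erase hw', ?_⟩
  rw [← hw, insert_erase hv', insert_erase hu]

section ExponentTwo

variable {G : Type*} [AddCommGroup G]

theorem add_eq_zero_iff_eq_of_add_self (hG : ∀ a : G, a + a = 0) {a b : G} :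
    a + b = 0 ↔ a = b := by
  rw [add_eq_zero_iff_eq_neg, neg_eq_of_add_eq_zero_left (hG b)]

theorem add_add_cancel_left_of_add_self (hG : ∀ a : G, a + a = 0) (a b : G) :
    a + (a + b) = b := by
  rw [← add_assoc, hG, zero_add]

variable [DecidableEq G]

theorem sum_notMem_of_card_eq_three (hG : ∀ a : G, a + a = 0) {s : Finset G} (hs : #s = 3) :
    ∑ x ∈ s, x ∉ s := by
  intro h
  obtain ⟨b, c, hbc, hs'⟩ := card_eq_two.1
    (by rw [card_erase_of_mem h, hs] : #(s.erase (∑ x ∈ s, x)) = 2)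
  have hsplit := add_sum_erase s id h
  rw [hs', sum_pair hbc] at hsplit
  exact hbc ((add_eq_zero_iff_eq_of_add_self hG).1 (add_eq_left.1 hsplit))

theorem card_triples_with_sum_mul_six_eq_card_pairs (hG : ∀ a : G, a + a = 0) (A : Finset G) {e : G}
    (he : e ∉ A) :
    #{s ∈ A.powersetCard 3 | ∑ x ∈ s, x = e} * 6
      = #{p ∈ A ×ˢ A | p.1 ≠ p.2 ∧ p.1 + p.2 + e ∈ A} := by
  set f : G × G → Finset G := fun p => {p.1, p.2, p.1 + p.2 + e}
  have hf : ∀ p ∈ {p ∈ A ×ˢ A | p.1 ≠ p.2 ∧ p.1 + p.2 + e ∈ A},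
      f p ∈ {s ∈ A.powersetCard 3 | ∑ x ∈ s, x = e} := by
    rintro ⟨u, v⟩ hp
    obtain ⟨⟨hu, hv⟩, huv, hw⟩ : (u ∈ A ∧ v ∈ A) ∧ u ≠ v ∧ u + v + e ∈ A := by
      simpa only [mem_filter, mem_product] using hp
    have hwu : u + v + e ≠ u := by
      rw [add_assoc, Ne, add_eq_left, add_eq_zero_iff_eq_of_add_self hG]
      exact ne_of_mem_of_not_mem hv he
    have hwv : u + v + e ≠ v := by
      rw [show u + v + e = v + (u + e) by abel, Ne, add_eq_left,
        add_eq_zero_iff_eq_of_add_self hG]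
      exact ne_of_mem_of_not_mem hu he
    simp only [f, mem_filter, mem_powersetCard, insert_subset_iff, singleton_subset_iff]
    refine ⟨⟨⟨hu, hv, hw⟩, card_eq_three.2 ⟨u, v, _, huv, hwu.symm, hwv.symm, rfl⟩⟩, ?_⟩
    rw [sum_insert (by simp [huv, hwu.symm]), sum_insert (by simpa using hwv.symm),
      sum_singleton, ← add_assoc, add_add_cancel_left_of_add_self hG]
  have hfiber : ∀ s ∈ {s ∈ A.powersetCard 3 | ∑ x ∈ s, x = e},
      {p ∈ {p ∈ A ×ˢ A | p.1 ≠ p.2 ∧ p.1 + p.2 + e ∈ A} | f p = s} = s.offDiag := by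
    intro s hs
    obtain ⟨⟨hsA, hs3⟩, hsum⟩ : (s ⊆ A ∧ #s = 3) ∧ ∑ x ∈ s, x = e := by
      simpa only [mem_filter, mem_powersetCard] using hs
    ext ⟨u, v⟩
    simp only [mem_filter, mem_product, mem_offDiag]
    constructor
    · rintro ⟨⟨_, huv, _⟩, rfl⟩
      simp [f, huv]
    · rintro ⟨hu, hv, huv⟩
      obtain ⟨w, hwu, hwv, rfl⟩ := exists_eq_triple_of_card_eq_three hs3 hu hv huv
      have hw : u + v + e = w := by
        rw [sum_insert (by simp [huv, hwu.symm]), sum_insert (by simpa using hwv.symm),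
          sum_singleton, ← add_assoc] at hsum
        rw [← hsum, add_add_cancel_left_of_add_self hG]
      exact ⟨⟨⟨hsA hu, hsA hv⟩, huv, hw ▸ hsA (by simp)⟩, by simp only [f, hw]⟩
  rw [card_eq_sum_card_fiberwise hf, sum_congr rfl fun s hs => by
    rw [hfiber s hs, offDiag_card, (mem_powersetCard.1 (mem_filter.1 hs).1).2], sum_const,
    smul_eq_mul]

def kleinFour (x y : G) : Finset G := {0, x, y, x + y}

theorem card_kleinFour (hG : ∀ a : G, a + a = 0) {x y : G} (hx : x ≠ 0) (hy : y ≠ 0)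
    (hxy : x ≠ y) : #(kleinFour x y) = 4 := by
  have hsx : x + y ≠ x := by simpa using hy
  have hsy : x + y ≠ y := by simpa using hx
  have hs0 : x + y ≠ 0 := by rwa [Ne, add_eq_zero_iff_eq_of_add_self hG]
  rw [kleinFour, card_insert_of_notMem (by simp [hx.symm, hy.symm, hs0.symm]),
    card_insert_of_notMem (by simp [hxy, hsx.symm]), card_pair hsy.symm]

theorem add_mem_kleinFour (hG : ∀ a : G, a + a = 0) {x y a b : G} (ha : a ∈ kleinFour x y)
    (hb : b ∈ kleinFour x y) : a + b ∈ kleinFour x y := by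
  simp only [kleinFour, mem_insert, mem_singleton] at ha hb ⊢
  rcases ha with rfl | rfl | rfl | rfl <;> rcases hb with rfl | rfl | rfl | rfl <;>
    simp [hG, add_left_comm, add_comm]

variable [Fintype G]

theorem card_compl_filter_add_notMem {K : Finset G} (hK : ∀ a ∈ K, ∀ b ∈ K, a - b ∈ K)
    {u : G} (hu : u ∉ K) :
    #{v ∈ Kᶜ | u + v ∉ K} = Fintype.card G - 2 * #K := by
  have hdisj : Disjoint K (K.image (-u + ·)) := by
    refine disjoint_left.2 fun a ha ha' => hu ?_
    obtain ⟨k, hk, rfl⟩ := mem_image.1 ha'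
    simpa using hK k hk _ ha
  have hfilter : {v ∈ Kᶜ | u + v ∉ K} = (K ∪ K.image (-u + ·))ᶜ := by
    ext v
    simp
  rw [hfilter, card_compl, card_union_of_disjoint hdisj,
    card_image_of_injective _ (add_right_injective _), two_mul]

theorem card_pairs_add_notMem (hG : ∀ a : G, a + a = 0) {K : Finset G}
    (hK : ∀ a ∈ K, ∀ b ∈ K, a + b ∈ K) {e : G} (he : e ∈ K) :
    #{p ∈ Kᶜ ×ˢ Kᶜ | p.1 ≠ p.2 ∧ p.1 + p.2 + e ∈ Kᶜ}
      = (Fintype.card G - #K) * (Fintype.card G - 2 * #K) := by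
  have hsub : ∀ a ∈ K, ∀ b ∈ K, a - b ∈ K := fun a ha b hb => by
    rw [sub_eq_add_neg, neg_eq_of_add_eq_zero_left (hG b)]
    exact hK a ha b hb
  have hpair : ∀ u v : G, u ≠ v ∧ u + v + e ∈ Kᶜ ↔ u + v ∉ K := by
    intro u v
    simp only [mem_compl]
    constructor
    · rintro ⟨-, hw⟩ huv
      exact hw (hK _ huv _ he)
    · intro huv
      refine ⟨fun h => huv ?_, fun hw => huv ?_⟩
      · rw [h, hG]
        simpa [hG] using hK e he e he
      · simpa [add_assoc, hG] using hK _ hw _ he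
  simp only [hpair]
  rw [card_filter, sum_product, ← card_compl, ← smul_eq_mul, ← sum_const]
  refine sum_congr rfl fun u hu => ?_
  rw [← card_filter]
  exact card_compl_filter_add_notMem hsub (mem_compl.1 hu)

theorem card_triples_compl_kleinFour_sum_eq (hG : ∀ a : G, a + a = 0) {x y : G} (hx : x ≠ 0)
    (hy : y ≠ 0) (hxy : x ≠ y) :
    #{s ∈ (kleinFour x y)ᶜ.powersetCard 3 | ∑ z ∈ s, z = x + y} * 6
      = (Fintype.card G - 4) * (Fintype.card G - 8) := by
  have he : x + y ∈ kleinFour x y := by simp [kleinFour]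
  rw [card_triples_with_sum_mul_six_eq_card_pairs hG _ (notMem_compl.2 he),
    card_pairs_add_notMem hG (fun _ ha _ hb => add_mem_kleinFour hG ha hb) he, card_kleinFour hG hx hy hxy]

end ExponentTwo

theorem stmt15_general (m : ℕ)
    (F : Type*) [Field F] [Fintype F]
    (hF : Fintype.card F = 2 ^ m)
    (x₁ x₂ : F) (h1 : x₁ ≠ 0) (h2 : x₂ ≠ 0) (h12 : x₁ ≠ x₂) :
    {s : Finset F | s.card = 3 ∧ (0 : F) ∉ s ∧ x₁ ∉ s ∧ x₂ ∉ s ∧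
      x₁ + x₂ + ∑ x ∈ s, x = 0}.ncard
      = (2 ^ m - 4) * (2 ^ m - 8) / 6 := by
  classical
  have : CharP F 2 := charP_of_card_eq_prime_pow hF
  have hG : ∀ a : F, a + a = 0 := CharTwo.add_self_eq_zero
  have hset : {s : Finset F | s.card = 3 ∧ (0 : F) ∉ s ∧ x₁ ∉ s ∧ x₂ ∉ s ∧
      x₁ + x₂ + ∑ x ∈ s, x = 0}
      = ↑{s ∈ (kleinFour x₁ x₂)ᶜ.powersetCard 3 | ∑ x ∈ s, x = x₁ + x₂} := by
    ext s
    simp only [Set.mem_ofPred_eq, coe_filter, mem_powersetCard, subset_iff, mem_compl, kleinFour,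
      mem_insert, mem_singleton, add_eq_zero_iff_eq_of_add_self hG, eq_comm (a := x₁ + x₂)]
    constructor
    · rintro ⟨hs, h0, hx₁, hx₂, hsum⟩
      refine ⟨⟨?_, hs⟩, hsum⟩
      rintro a ha (rfl | rfl | rfl | rfl)
      exacts [h0 ha, hx₁ ha, hx₂ ha, sum_notMem_of_card_eq_three hG hs (hsum ▸ ha)]
    · rintro ⟨⟨hK, hs⟩, hsum⟩
      exact ⟨hs, fun h => hK h (.inl rfl), fun h => hK h (.inr (.inl rfl)),
        fun h => hK h (.inr (.inr (.inl rfl))), hsum⟩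
  rw [hset, Set.ncard_coe_finset, ← hF]
  exact (Nat.div_eq_of_eq_mul_left (by norm_num)
    (card_triples_compl_kleinFour_sum_eq hG h1 h2 h12).symm).symm

theorem stmt15 (m : ℕ) (hm : 3 < m)
    (F : Type*) [Field F] [Fintype F] [DecidableEq F]
    (hF : Fintype.card F = 2 ^ m)
    (x₁ x₂ : F) (h1 : x₁ ≠ 0) (h2 : x₂ ≠ 0) (h12 : x₁ ≠ x₂) :
    {s : Finset F | s.card = 3 ∧ (0 : F) ∉ s ∧ x₁ ∉ s ∧ x₂ ∉ s ∧
      x₁ + x₂ + ∑ x ∈ s, x = 0}.ncard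
      = (2 ^ m - 4) * (2 ^ m - 8) / 6 :=
  stmt15_general m F hF x₁ x₂ h1 h2 h12
end

section
/- Let q = 2^m with m ≥ 3, h a positive integer with gcd(h, m) = 1, and let α_1, ..., α_{q-1} enumerate F_q^*. The linear code C over F_q generated by the 3 × (q-1) matrix with rows (1,...,1), (α_1,...,α_{q-1}), (α_1^{2^h+1},...,α_{q-1}^{2^h+1}) has dimension 3 and minimum distance q-4; its dual has minimum distance 3. In particular C is a near-MDS [q-1, 3, q-4] code. -/
/-!
Write `e = 2 ^ h`. Since `gcd (2 ^ h - 1) (2 ^ m - 1) = 2 ^ gcd h m - 1 = 1`, the map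
`x ↦ x ^ (e - 1)` is a bijection of `F`. If `r` is a root of `x ^ (e + 1) + B x + C`, the
substitution `t = (x - r)⁻¹` (using `(s + r) ^ e = s ^ e + r ^ e`) sends the other roots to
solutions of `β t ^ e + r t + 1 = 0` with `β = r ^ e + B`, an inhomogeneous `𝔽₂`-linear
equation whose kernel has at most two elements (a nonzero kernel element `u` is pinned down by `u ^ (e - 1) = -r / β`).
So the trinomial has at most three roots, which gives weight `≥ q - 4` and injectivity.
Running the substitution backwards from a kernel element produces a trinomial with three
nonzero roots `x₁, x₂, x₃`: a codeword of weight `q - 4`, and the dual word with entries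
`x₂ - x₃, x₃ - x₁, x₁ - x₂` at those points. Finally, a nonzero word orthogonal to `1` and
`x` alone already has weight at least `3`, the evaluation points being distinct.
-/

open Function

theorem pow_injective_of_coprime_card_sub_one {K : Type*} [Field K] [Fintype K] {k : ℕ}
    (hk : k ≠ 0) (hco : k.Coprime (Fintype.card K - 1)) : Injective fun x : K => x ^ k := by
  have hbij : Bijective fun u : Kˣ => u ^ k := by
    apply Nat.Coprime.pow_left_bijective
    rwa [Nat.card_units, Nat.card_eq_fintype_card, Nat.coprime_comm]
  intro x y hxy
  simp only at hxy
  rcases eq_or_ne x 0 with rfl | hx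
  · rw [zero_pow hk, eq_comm, pow_eq_zero_iff hk] at hxy
    exact hxy.symm
  rcases eq_or_ne y 0 with rfl | hy
  · rwa [zero_pow hk, pow_eq_zero_iff hk] at hxy
  have : Units.mk0 x hx = Units.mk0 y hy := hbij.injective (Units.ext (by simpa using hxy))
  simpa using congrArg Units.val this

section CharTwo

variable {K : Type*} [Field K] [CharP K 2] {n : ℕ}

theorem trinomial_shift (B C r s : K) :
    (s + r) ^ (2 ^ n + 1) + B * (s + r) + C =
      s ^ (2 ^ n + 1) + r * s ^ 2 ^ n + (r ^ 2 ^ n + B) * s + (r ^ (2 ^ n + 1) + B * r + C) := by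
  rw [pow_succ, add_pow_char_pow]
  ring

theorem trinomial_shift_eq_zero_iff {B C r s : K} (hr : r ^ (2 ^ n + 1) + B * r + C = 0)
    (hs : s ≠ 0) :
    (s + r) ^ (2 ^ n + 1) + B * (s + r) + C = 0 ↔
      (r ^ 2 ^ n + B) * s⁻¹ ^ 2 ^ n + r * s⁻¹ + 1 = 0 := by
  rw [trinomial_shift, hr, add_zero]
  have : s ^ (2 ^ n + 1) + r * s ^ 2 ^ n + (r ^ 2 ^ n + B) * s =
      s ^ (2 ^ n + 1) * ((r ^ 2 ^ n + B) * s⁻¹ ^ 2 ^ n + r * s⁻¹ + 1) := by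
    simp only [inv_pow]
    field_simp
    ring
  rw [this, mul_eq_zero, or_iff_right (pow_ne_zero _ hs)]

theorem ncard_linearized_roots_le_two (hinj : Injective fun x : K => x ^ (2 ^ n - 1))
    (β r : K) : {t : K | β * t ^ 2 ^ n + r * t + 1 = 0}.ncard ≤ 2 := by
  by_contra! h3
  obtain ⟨t₀, t₁, t₂, h₀, h₁, h₂, h₀₁, h₀₂, h₁₂⟩ :=
    (Set.two_lt_ncard_iff (Set.finite_of_ncard_pos (by omega))).mp h3
  simp only [Set.mem_ofPred_eq] at h₀ h₁ h₂
  have kernel : ∀ t, β * t ^ 2 ^ n + r * t + 1 = 0 → t ≠ t₀ →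
      β * (t - t₀) ^ (2 ^ n - 1) + r = 0 := by
    intro t ht hne
    have h : (β * (t - t₀) ^ (2 ^ n - 1) + r) * (t - t₀) = 0 := by
      have hpow : (t - t₀) ^ (2 ^ n - 1) * (t - t₀) = t ^ 2 ^ n - t₀ ^ 2 ^ n := by
        rw [pow_sub_one_mul (by positivity), sub_pow_char_pow]
      linear_combination ht - h₀ + β * hpow
    exact (mul_eq_zero.mp h).resolve_right (sub_ne_zero.mpr hne)
  have k₁ := kernel t₁ h₁ h₀₁.symm
  have k₂ := kernel t₂ h₂ h₀₂.symm
  have hβ : β ≠ 0 := by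
    rintro rfl
    have hr : r = 0 := by simpa using k₁
    simp [hr] at h₀
  have : (t₁ - t₀) ^ (2 ^ n - 1) = (t₂ - t₀) ^ (2 ^ n - 1) :=
    mul_left_cancel₀ hβ (by linear_combination k₁ - k₂)
  exact h₁₂ (sub_left_injective (hinj this))

theorem ncard_trinomial_roots_le_three [Finite K] (hinj : Injective fun x : K => x ^ (2 ^ n - 1))
    (B C : K) : {x : K | x ^ (2 ^ n + 1) + B * x + C = 0}.ncard ≤ 3 := by
  set R := {x : K | x ^ (2 ^ n + 1) + B * x + C = 0}
  rcases R.eq_empty_or_nonempty with hR | ⟨r, hr⟩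
  · simp [hR]
  have hshift : ∀ x ∈ R \ {r}, (r ^ 2 ^ n + B) * ((x - r)⁻¹) ^ 2 ^ n + r * (x - r)⁻¹ + 1 = 0 := by
    rintro x ⟨hx, hxr⟩
    refine (trinomial_shift_eq_zero_iff hr (sub_ne_zero.mpr hxr)).mp ?_
    rwa [sub_add_cancel]
  have hinjOn : Set.InjOn (fun x => (x - r)⁻¹) (R \ {r}) := fun x _ y _ h => by simpa using h
  have := (Set.ncard_le_ncard_of_injOn _ hshift hinjOn).trans
    (ncard_linearized_roots_le_two hinj _ r)
  rw [← Set.ncard_sdiff_singleton_add_one hr]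
  omega

theorem ncard_trinomial_roots_le_three_of_ne_zero [Finite K]
    (hinj : Injective fun x : K => x ^ (2 ^ n - 1)) {a b c : K} (habc : ¬(a = 0 ∧ b = 0 ∧ c = 0)) :
    {x : K | a * x ^ (2 ^ n + 1) + b * x + c = 0}.ncard ≤ 3 := by
  rcases eq_or_ne a 0 with rfl | ha
  · have hsub : {x : K | 0 * x ^ (2 ^ n + 1) + b * x + c = 0} ⊆ {-c / b} := by
      intro x hx
      simp only [Set.mem_ofPred_eq, zero_mul, zero_add] at hx
      have hb : b ≠ 0 := by
        rintro rfl
        exact habc ⟨rfl, rfl, by simpa using hx⟩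
      rw [Set.mem_singleton_iff, eq_div_iff hb]
      linear_combination hx
    exact (Set.ncard_le_ncard hsub).trans (by simp)
  · refine le_of_eq_of_le (congrArg Set.ncard ?_)
      (ncard_trinomial_roots_le_three hinj (b / a) (c / a))
    ext x
    have : a * x ^ (2 ^ n + 1) + b * x + c = a * (x ^ (2 ^ n + 1) + b / a * x + c / a) := by
      field_simp
    simp only [Set.mem_ofPred_eq, this, mul_eq_zero, ha, false_or]

theorem exists_trinomial_three_nonzero_roots [Fintype K] (hn : n ≠ 0)
    (hinj : Injective fun x : K => x ^ (2 ^ n - 1)) (hK : 2 < Fintype.card K) :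
    ∃ B C x₁ x₂ x₃ : K, x₁ ≠ x₂ ∧ x₁ ≠ x₃ ∧ x₂ ≠ x₃ ∧ x₁ ≠ 0 ∧ x₂ ≠ 0 ∧ x₃ ≠ 0 ∧
      x₁ ^ (2 ^ n + 1) + B * x₁ + C = 0 ∧ x₂ ^ (2 ^ n + 1) + B * x₂ + C = 0 ∧
      x₃ ^ (2 ^ n + 1) + B * x₃ + C = 0 := by
  classical
  -- `1` is a root of `x ^ (e + 1) + (β + 1) x + β`, and `t ↦ t⁻¹ + 1` inverts the substitution
  -- `t = (x - 1)⁻¹`; the two solutions `w` and `w + k` of `β t ^ e + t + 1 = 0` differ by the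
  -- kernel element `k` with `β k ^ (e - 1) = 1`.
  have h2 : (2 : K) = 0 := CharTwo.two_eq_zero
  obtain ⟨w, -, hw⟩ := Finset.exists_mem_notMem_of_card_lt_card
    (s := ({0, 1} : Finset K)) (t := Finset.univ) ((Finset.card_le_two).trans_lt hK)
  simp only [Finset.mem_insert, Finset.mem_singleton, not_or] at hw
  obtain ⟨hw₀, hw₁⟩ := hw
  set β := (w + 1) / w ^ 2 ^ n
  have hβ : β ≠ 0 := div_ne_zero (fun h => hw₁ (by linear_combination h - h2)) (pow_ne_zero _ hw₀)
  have hβw : β * w ^ 2 ^ n + w + 1 = 0 := by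
    simp only [β]
    field_simp
    linear_combination (w + 1) * h2
  obtain ⟨k, hk⟩ := Finite.surjective_of_injective hinj β⁻¹
  simp only at hk
  have hk₀ : k ≠ 0 := by
    rintro rfl
    rw [zero_pow (Nat.sub_pos_of_lt (Nat.one_lt_two_pow hn)).ne'] at hk
    exact inv_ne_zero hβ hk.symm
  have hβwk : β * (w + k) ^ 2 ^ n + (w + k) + 1 = 0 := by
    have hpow : k ^ (2 ^ n - 1) * k = k ^ 2 ^ n := pow_sub_one_mul (by positivity) k
    rw [add_pow_char_pow, ← hpow, hk]
    field_simp
    linear_combination hβw + k * h2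
  have hsol₀ : ∀ t : K, β * t ^ 2 ^ n + t + 1 = 0 → t ≠ 0 := by
    rintro t ht rfl
    simp at ht
  have hr : (1 : K) ^ (2 ^ n + 1) + (β + 1) * 1 + β = 0 := by linear_combination (β + 1) * h2
  have hroot : ∀ t : K, β * t ^ 2 ^ n + t + 1 = 0 →
      (t⁻¹ + 1) ^ (2 ^ n + 1) + (β + 1) * (t⁻¹ + 1) + β = 0 := by
    intro t ht
    refine (trinomial_shift_eq_zero_iff hr (inv_ne_zero (hsol₀ t ht))).mpr ?_
    rw [inv_inv, one_pow]
    linear_combination ht + t ^ 2 ^ n * h2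
  have hroot₀ : ∀ t : K, β * t ^ 2 ^ n + t + 1 = 0 → t⁻¹ + 1 ≠ 0 := by
    intro t ht h
    have : t = -1 := by rw [← inv_inv t, eq_neg_of_add_eq_zero_left h, inv_neg, inv_one]
    rw [this, (even_two.pow_of_ne_zero hn).neg_one_pow] at ht
    exact hβ (by linear_combination ht)
  refine ⟨β + 1, β, 1, w⁻¹ + 1, (w + k)⁻¹ + 1, ?_, ?_, ?_, one_ne_zero, hroot₀ _ hβw,
    hroot₀ _ hβwk, hr, hroot _ hβw, hroot _ hβwk⟩
  · simpa using hw₀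
  · simpa using hsol₀ _ hβwk
  · simpa using hk₀

end CharTwo

section Dual

variable {ι K : Type*} [Fintype ι] [Field K] {p : ι → K}

theorem two_lt_ncard_support_of_orthogonal (hp : Injective p) {v : ι → K} (hv : v ≠ 0)
    (h₀ : ∑ i, v i = 0) (h₁ : ∑ i, v i * p i = 0) : 2 < {i | v i ≠ 0}.ncard := by
  obtain ⟨i, hi⟩ := Function.ne_iff.mp hv
  have exists_other : ∀ f : ι → K, ∑ j, v j * f j = 0 → f i ≠ 0 → ∃ j ≠ i, v j * f j ≠ 0 := by
    intro f hf hfi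
    by_contra! h
    rw [Finset.sum_eq_single_of_mem i (Finset.mem_univ i) fun j _ hj => h j hj] at hf
    exact mul_ne_zero hi hfi hf
  obtain ⟨j, hji, hj⟩ := exists_other 1 (by simpa using h₀) one_ne_zero
  obtain ⟨k, hki, hk⟩ := exists_other (fun l => p l - p j)
    (by simp [mul_sub, Finset.sum_sub_distrib, ← Finset.sum_mul, h₀, h₁])
    (sub_ne_zero.mpr (hp.ne hji.symm))
  have hkj : k ≠ j := by
    rintro rfl
    simp at hk
  exact (Set.two_lt_ncard_iff).mpr
    ⟨i, j, k, hi, left_ne_zero_of_mul hj, left_ne_zero_of_mul hk, hji.symm, hki.symm, hkj.symm⟩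

theorem exists_orthogonal_ncard_support_eq_three [DecidableEq ι] (hp : Injective p) {N : ℕ}
    {B C : K} {i₁ i₂ i₃ : ι} (h₁₂ : i₁ ≠ i₂) (h₁₃ : i₁ ≠ i₃) (h₂₃ : i₂ ≠ i₃)
    (hr₁ : p i₁ ^ N + B * p i₁ + C = 0) (hr₂ : p i₂ ^ N + B * p i₂ + C = 0)
    (hr₃ : p i₃ ^ N + B * p i₃ + C = 0) :
    ∃ v : ι → K, v ≠ 0 ∧ (∀ a b c : K, ∑ i, v i * (a * p i ^ N + b * p i + c) = 0) ∧
      {i | v i ≠ 0}.ncard = 3 := by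
  set v : ι → K :=
    Pi.single i₁ (p i₂ - p i₃) + Pi.single i₂ (p i₃ - p i₁) + Pi.single i₃ (p i₁ - p i₂)
  have d₂₃ : p i₂ - p i₃ ≠ 0 := sub_ne_zero.mpr (hp.ne h₂₃)
  have hsupp : {i | v i ≠ 0} = {i₁, i₂, i₃} := by
    ext i
    by_cases e₁ : i = i₁ <;> by_cases e₂ : i = i₂ <;> by_cases e₃ : i = i₃ <;>
      simp_all [v, Pi.single_apply, sub_eq_zero, hp.ne h₁₂, hp.ne h₁₃.symm]
  refine ⟨v, fun hv => ?_, fun a b c => ?_, ?_⟩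
  · exact d₂₃ (by simpa [v, h₁₂.symm, h₁₃.symm] using congrFun hv i₁)
  · simp only [v, Pi.add_apply, add_mul, Finset.sum_add_distrib, Pi.single_apply, ite_mul, zero_mul,
      Finset.sum_ite_eq', Finset.mem_univ, if_true]
    linear_combination a * (p i₂ - p i₃) * hr₁ + a * (p i₃ - p i₁) * hr₂ + a * (p i₁ - p i₂) * hr₃
  · rw [hsupp, Set.ncard_eq_three]
    exact ⟨i₁, i₂, i₃, h₁₂, h₁₃, h₂₃, rfl⟩

end Dual

theorem ncard_ne_zero_add_ncard_eq_zero {ι M : Type*} [Finite ι] [Zero M] (w : ι → M) :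
    {i | w i ≠ 0}.ncard + {i | w i = 0}.ncard = Nat.card ι := by
  rw [add_comm]
  exact Set.ncard_add_ncard_compl _

theorem nat_card_nonzero_eq_card_sub_one (K : Type*) [Field K] [Fintype K] :
    Nat.card {x : K // x ≠ 0} = Fintype.card K - 1 := by
  rw [← Nat.card_congr unitsEquivNeZero, Nat.card_units, Nat.card_eq_fintype_card]

section Code

variable {K : Type*} [Field K] [Fintype K] [CharP K 2] {n : ℕ}

theorem le_ncard_codeword_ne_zero (hinj : Injective fun x : K => x ^ (2 ^ n - 1)) {a b c : K}
    (habc : ¬(a = 0 ∧ b = 0 ∧ c = 0)) :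
    Fintype.card K - 4 ≤
      {x : {x : K // x ≠ 0} | a * (x : K) ^ (2 ^ n + 1) + b * x + c ≠ 0}.ncard := by
  have hzeros : {x : {x : K // x ≠ 0} | a * (x : K) ^ (2 ^ n + 1) + b * x + c = 0}.ncard ≤ 3 :=
    (Set.ncard_le_ncard_of_injOn Subtype.val (fun _ hx => hx) Subtype.val_injective.injOn).trans
      (ncard_trinomial_roots_le_three_of_ne_zero hinj habc)
  have := ncard_ne_zero_add_ncard_eq_zero
    fun x : {x : K // x ≠ 0} => a * (x : K) ^ (2 ^ n + 1) + b * x + c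
  rw [nat_card_nonzero_eq_card_sub_one] at this
  omega

theorem codeword_injective (hinj : Injective fun x : K => x ^ (2 ^ n - 1))
    (hK : 4 < Fintype.card K) :
    Injective fun abc : K × K × K => fun x : {x : K // x ≠ 0} =>
      abc.1 * (x : K) ^ (2 ^ n + 1) + abc.2.1 * x + abc.2.2 := by
  rintro ⟨a, b, c⟩ ⟨a', b', c'⟩ h
  by_contra hne
  have habc : ¬(a - a' = 0 ∧ b - b' = 0 ∧ c - c' = 0) := by
    simp only [sub_eq_zero]
    rintro ⟨rfl, rfl, rfl⟩
    exact hne rfl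
  have hzero : {x : {x : K // x ≠ 0} |
      (a - a') * (x : K) ^ (2 ^ n + 1) + (b - b') * x + (c - c') ≠ 0} = ∅ := by
    ext x
    simp only [Set.mem_ofPred_eq, Set.mem_empty_iff_false, iff_false, not_not]
    linear_combination congrFun h x
  have := le_ncard_codeword_ne_zero hinj habc
  rw [hzero, Set.ncard_empty] at this
  omega

theorem exists_ncard_codeword_ne_zero_eq (hn : n ≠ 0)
    (hinj : Injective fun x : K => x ^ (2 ^ n - 1)) (hK : 2 < Fintype.card K) :
    ∃ a b c : K, {x : {x : K // x ≠ 0} | a * (x : K) ^ (2 ^ n + 1) + b * x + c ≠ 0}.ncard =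
      Fintype.card K - 4 := by
  obtain ⟨B, C, x₁, x₂, x₃, h₁₂, h₁₃, h₂₃, h₀₁, h₀₂, h₀₃, hr₁, hr₂, hr₃⟩ :=
    exists_trinomial_three_nonzero_roots hn hinj hK
  refine ⟨1, B, C, ?_⟩
  set w := fun x : {x : K // x ≠ 0} => 1 * (x : K) ^ (2 ^ n + 1) + B * x + C
  have hroots : ({⟨x₁, h₀₁⟩, ⟨x₂, h₀₂⟩, ⟨x₃, h₀₃⟩} : Set {x : K // x ≠ 0}) ⊆ {x | w x = 0} := by
    rintro x (rfl | rfl | rfl) <;> simpa [w]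
  have hthree : ({⟨x₁, h₀₁⟩, ⟨x₂, h₀₂⟩, ⟨x₃, h₀₃⟩} : Set {x : K // x ≠ 0}).ncard = 3 :=
    Set.ncard_eq_three.mpr ⟨_, _, _, by simpa, by simpa, by simpa, rfl⟩
  have hlower := le_ncard_codeword_ne_zero hinj (a := 1) (b := B) (c := C) (by simp)
  have hsum := ncard_ne_zero_add_ncard_eq_zero w
  rw [nat_card_nonzero_eq_card_sub_one] at hsum
  have := hthree ▸ Set.ncard_le_ncard hroots
  simp only [w] at hsum this
  omega

theorem exists_orthogonal_codewords_ncard_support_eq_three [DecidableEq K] (hn : n ≠ 0)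
    (hinj : Injective fun x : K => x ^ (2 ^ n - 1)) (hK : 2 < Fintype.card K) :
    ∃ v : {x : K // x ≠ 0} → K, v ≠ 0 ∧
      (∀ a b c : K, ∑ x, v x * (a * (x : K) ^ (2 ^ n + 1) + b * x + c) = 0) ∧
        {x | v x ≠ 0}.ncard = 3 := by
  obtain ⟨B, C, x₁, x₂, x₃, h₁₂, h₁₃, h₂₃, h₀₁, h₀₂, h₀₃, hr₁, hr₂, hr₃⟩ :=
    exists_trinomial_three_nonzero_roots hn hinj hK
  exact exists_orthogonal_ncard_support_eq_three Subtype.val_injective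
    (i₁ := ⟨x₁, h₀₁⟩) (i₂ := ⟨x₂, h₀₂⟩) (i₃ := ⟨x₃, h₀₃⟩) (by simpa) (by simpa) (by simpa)
    hr₁ hr₂ hr₃

end Code

theorem stmt18 (m h : ℕ) (hm : 3 ≤ m) (hh : 0 < h) (hgcd : Nat.gcd h m = 1)
    (F : Type*) [Field F] [Fintype F] [DecidableEq F]
    (hF : Fintype.card F = 2 ^ m)
    (cw : F → F → F → ({x : F // x ≠ 0} → F))
    (hcw : cw = fun a b c (x : {x : F // x ≠ 0}) =>
      a * (x : F) ^ (2 ^ h + 1) + b * (x : F) + c)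
    (wt : ({x : F // x ≠ 0} → F) → ℕ)
    (hwt : wt = fun w => {x | w x ≠ 0}.ncard) :
    -- the code has dimension 3
    (Function.Injective (fun abc : F × F × F => cw abc.1 abc.2.1 abc.2.2)) ∧
    -- minimum distance is q - 4
    (∀ a b c : F, ¬(a = 0 ∧ b = 0 ∧ c = 0) → 2 ^ m - 4 ≤ wt (cw a b c)) ∧
    (∃ a b c : F, wt (cw a b c) = 2 ^ m - 4) ∧
    -- the dual code has minimum distance 3
    (∀ v : {x : F // x ≠ 0} → F, v ≠ 0 →
      (∀ a b c : F, ∑ x : {x : F // x ≠ 0}, v x * cw a b c x = 0) →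
        3 ≤ wt v) ∧
    (∃ v : {x : F // x ≠ 0} → F, v ≠ 0 ∧
      (∀ a b c : F, ∑ x : {x : F // x ≠ 0}, v x * cw a b c x = 0) ∧
        wt v = 3) := by
  have : CharP F 2 := charP_of_card_eq_prime_pow hF
  have hinj : Injective fun x : F => x ^ (2 ^ h - 1) :=
    pow_injective_of_coprime_card_sub_one (Nat.sub_ne_zero_of_lt (Nat.one_lt_two_pow hh.ne'))
      (by rw [hF, Nat.Coprime, Nat.pow_sub_one_gcd_pow_sub_one, hgcd, pow_one])
  have hq : 8 ≤ Fintype.card F := hF ▸ Nat.pow_le_pow_right two_pos hm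
  subst hcw hwt
  rw [← hF]
  refine ⟨codeword_injective hinj (by omega), fun a b c habc => le_ncard_codeword_ne_zero hinj habc,
    exists_ncard_codeword_ne_zero_eq hh.ne' hinj (by omega), fun v hv hortho => ?_,
    exists_orthogonal_codewords_ncard_support_eq_three hh.ne' hinj (by omega)⟩
  exact two_lt_ncard_support_of_orthogonal Subtype.val_injective hv (by simpa using hortho 0 0 1)
    (by simpa using hortho 0 1 0)
end
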